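/- arXiv:0805.1657 — 7 statements merged into one kernel-verified Lean document; each statement's English description precedes it below -/
import Mathlib

section
/- Let $K$ be a field, $R = K[x_1,\dots,x_n]$, and let $P$ be a finite set of elements of $R$. Suppose $P_0, P_1, \dots, P_r$ are subsets of $P$ such that (i) their union is $P$, (ii) $P_0$ has exactly one element, (iii) whenever $p \neq p'$ are elements of $P_i$ with $0 < i \leq r$, there exists $i' < i$ and an element of $P_{i'}$ dividing $pp'$. For each $p \in P$ choose an integer $e(p) \geq 1$ and set $q_i = \sum_{p \in P_i} p^{e(p)}$. Then the radical of the ideal generated by $P$ equals the radical of the ideal generated by $q_0, \dots, q_r$. -/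
/-- **Schmitt–Vogel lemma.**  Let `R = K[x₁,…,xₙ]`, `P` a finite set of elements of `R`
and `P₀,…,P_r` subsets of `P` such that (i) their union is `P`, (ii) `P₀` has exactly one
element, and (iii) for `0 < i` and distinct `p, p' ∈ Pᵢ` there are `i' < i` and an element
of `P_{i'}` dividing `p * p'`.  For exponents `e p ≥ 1` set `qᵢ = ∑_{p ∈ Pᵢ} p ^ (e p)`.
Then `√(P) = √(q₀,…,q_r)`. -/
theorem schmitt_vogel (K : Type) [Field K] (n : ℕ) (r : ℕ)
    (P : Finset (MvPolynomial (Fin n) K))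
    (Ps : Fin (r + 1) → Finset (MvPolynomial (Fin n) K))
    (hsub : ∀ i, Ps i ⊆ P)
    (hcover : ∀ p ∈ P, ∃ i, p ∈ Ps i)
    (hcard : (Ps 0).card = 1)
    (hdiv : ∀ i : Fin (r + 1), 0 < (i : ℕ) → ∀ p ∈ Ps i, ∀ p' ∈ Ps i, p ≠ p' →
      ∃ i' : Fin (r + 1), (i' : ℕ) < (i : ℕ) ∧ ∃ q ∈ Ps i', q ∣ p * p')
    (e : MvPolynomial (Fin n) K → ℕ) (he : ∀ p ∈ P, 1 ≤ e p) :
    (Ideal.span (P : Set (MvPolynomial (Fin n) K))).radical =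
      (Ideal.span (Set.range fun i : Fin (r + 1) => ∑ p ∈ Ps i, p ^ (e p))).radical := by
  classical
  apply le_antisymm
  · -- span P ≤ radical (span q)
    have h1 : Ideal.span (P : Set (MvPolynomial (Fin n) K)) ≤
        (Ideal.span (Set.range fun i : Fin (r + 1) => ∑ p ∈ Ps i, p ^ (e p))).radical := by
      rw [Ideal.radical_eq_sInf]
      apply le_sInf
      rintro J ⟨hJ, hprime⟩
      rw [Ideal.span_le]
      have key : ∀ m : ℕ, ∀ i : Fin (r + 1), (i : ℕ) = m → ∀ p ∈ Ps i, p ∈ J := by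
        intro m
        induction m using Nat.strong_induction_on with
        | _ m ih =>
          intro i hi p hp
          have hqi : (∑ p ∈ Ps i, p ^ (e p)) ∈ J := hJ (Ideal.subset_span ⟨i, rfl⟩)
          rcases Nat.eq_zero_or_pos m with hm | hm
          · -- base case: i = 0
            have hi0 : i = 0 := Fin.ext (by simp [hi, hm])
            subst hi0
            obtain ⟨a, ha⟩ := Finset.card_eq_one.mp hcard
            rw [ha] at hp hqi
            rw [Finset.sum_singleton] at hqi
            rw [Finset.mem_singleton] at hp
            subst hp
            exact hprime.mem_of_pow_mem _ hqi
          · have h0 : 0 < (i : ℕ) := hi ▸ hm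
            -- every other term p * p'^{e p'} is in J
            have step : ∀ p' ∈ (Ps i).erase p, p * p' ^ (e p') ∈ J := by
              intro p' hp'
              have hp'' := Finset.mem_of_mem_erase hp'
              have hne : p ≠ p' := (Finset.ne_of_mem_erase hp').symm
              obtain ⟨i', hi', q', hq', hdvd⟩ := hdiv i h0 p hp p' hp'' hne
              have hq'J : q' ∈ J := ih (i' : ℕ) (hi ▸ hi') i' rfl q' hq'
              have hpp' : p * p' ∈ J := by
                obtain ⟨c, hc⟩ := hdvd
                rw [hc]; exact J.mul_mem_right c hq'J
              have he' : 1 ≤ e p' := he p' (hsub i hp'')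
              have hrw : p * p' ^ (e p') = (p * p') * p' ^ (e p' - 1) := by
                rw [mul_assoc, ← pow_succ']
                congr 2
                omega
              rw [hrw]
              exact J.mul_mem_right _ hpp'
            have hsum : (∑ p' ∈ (Ps i).erase p, p * p' ^ (e p')) ∈ J :=
              Ideal.sum_mem _ step
            have hpow : p ^ (e p + 1) ∈ J := by
              have heq : p ^ (e p + 1) =
                  p * (∑ p' ∈ Ps i, p' ^ (e p')) -
                    ∑ p' ∈ (Ps i).erase p, p * p' ^ (e p') := by
                rw [← Finset.add_sum_erase _ _ hp, mul_add, Finset.mul_sum,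
                  add_sub_cancel_right, ← pow_succ']
              rw [heq]
              exact J.sub_mem (J.mul_mem_left p hqi) hsum
            exact hprime.mem_of_pow_mem _ hpow
      intro p hp
      obtain ⟨i, hi⟩ := hcover p hp
      exact key (i : ℕ) i rfl p hi
    calc (Ideal.span (P : Set (MvPolynomial (Fin n) K))).radical ≤
        (Ideal.span (Set.range fun i : Fin (r + 1) => ∑ p ∈ Ps i, p ^ (e p))).radical.radical :=
          Ideal.radical_mono h1
      _ = _ := (Ideal.span _).radical_idem
  · -- span q ≤ span P ≤ radical (span P)
    apply Ideal.radical_mono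
    rw [Ideal.span_le]
    rintro _ ⟨i, rfl⟩
    apply Ideal.sum_mem
    intro p hp
    exact Ideal.pow_mem_of_mem _ (Ideal.subset_span (hsub i hp)) _ (he p (hsub i hp))
end

section
/- Let $K$ be a field, $n = 3m$ for an integer $m \geq 1$, and $R = K[x_1,\dots,x_n]$. Let $I(C_n) = (x_1x_2, x_2x_3, \dots, x_{n-1}x_n, x_1x_n)$ be the edge ideal of the $n$-cycle. Define $q_0 = x_1x_2$, $q_1 = x_1x_{3m} + x_2x_3$, and for $1 \leq i \leq m-1$: $q_{2i} = x_{3i+1}x_{3i+2}$ and $q_{2i+1} = x_{3i}x_{3i+1} + x_{3i+2}x_{3i+3}$. Then $I(C_n) = \sqrt{(q_0, \dots, q_{2m-1})}$. -/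
open MvPolynomial

/-- Arithmetical rank: the least number of elements of `R` generating `I` up to radical. -/
noncomputable def araRank {R : Type} [CommRing R] (I : Ideal R) : ℕ :=
  sInf {s : ℕ | ∃ f : Fin s → R, (Ideal.span (Set.range f)).radical = I.radical}

/-- The edge ideal `I(Cₙ) = (x₁x₂, x₂x₃, …, x_{n-1}xₙ, x₁xₙ)` of the `n`-cycle,
with the vertices `x₁,…,xₙ` of the cycle indexed by `ZMod n` (`xⱼ = X (j : ZMod n)`). -/
noncomputable def cycleIdeal (K : Type) [Field K] (n : ℕ) :
    Ideal (MvPolynomial (ZMod n) K) :=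
  Ideal.span (Set.range fun i : ZMod n => X i * X (i + 1))

/-- `xⱼ`, the `j`-th variable of the polynomial ring (indices taken mod `n`). -/
noncomputable def xv (K : Type) [Field K] (n : ℕ) (j : ℕ) : MvPolynomial (ZMod n) K :=
  X (j : ZMod n)

/-- The Schmitt–Vogel style elements `q₀,…,q_{2m-1}` for the cycle `C_n`, `n = 3m`:
`q₀ = x₁x₂`, `q₁ = x₁x_{3m} + x₂x₃`, and for `1 ≤ i ≤ m-1`,
`q_{2i} = x_{3i+1}x_{3i+2}` and `q_{2i+1} = x_{3i}x_{3i+1} + x_{3i+2}x_{3i+3}`. -/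
noncomputable def qZero (K : Type) [Field K] (n m : ℕ) (j : ℕ) : MvPolynomial (ZMod n) K :=
  if j = 0 then xv K n 1 * xv K n 2
  else if j = 1 then xv K n 1 * xv K n (3 * m) + xv K n 2 * xv K n 3
  else if j % 2 = 0 then xv K n (3 * (j / 2) + 1) * xv K n (3 * (j / 2) + 2)
  else xv K n (3 * (j / 2)) * xv K n (3 * (j / 2) + 1) +
    xv K n (3 * (j / 2) + 2) * xv K n (3 * (j / 2) + 3)


section SquarefreeRadical
open Finsupp
variable {σ K : Type} [Field K] [LinearOrder σ]

/-- The "monomial membership criterion" ideal. -/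
def monCrit (K : Type) [Field K] (S : Set (σ →₀ ℕ)) : Ideal (MvPolynomial σ K) where
  carrier := {p | ∀ e ∈ p.support, ∃ d ∈ S, d ≤ e}
  zero_mem' := by simp
  add_mem' := by
    classical
    intro p q hp hq e he
    rcases Finset.mem_union.mp (MvPolynomial.support_add he) with h | h
    · exact hp e h
    · exact hq e h
  smul_mem' := by
    classical
    intro c p hp e he
    rcases Finset.mem_add.mp (MvPolynomial.support_mul c p he) with ⟨e1, _, e2, h2, rfl⟩
    obtain ⟨d, hd, hde⟩ := hp e2 h2
    exact ⟨d, hd, hde.trans le_add_self⟩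

theorem monCrit_span_eq (S : Set (σ →₀ ℕ)) :
    Ideal.span ((fun d => (monomial d (1:K))) '' S) = monCrit K S := by
  classical
  apply le_antisymm
  · rw [Ideal.span_le]
    rintro _ ⟨d, hd, rfl⟩
    intro e he
    rw [MvPolynomial.support_monomial] at he
    simp only [one_ne_zero, if_false, Finset.mem_singleton] at he
    exact ⟨d, hd, he ▸ le_rfl⟩
  · intro p hp
    rw [← p.support_sum_monomial_coeff]
    refine Ideal.sum_mem _ fun e he => ?_
    obtain ⟨d, hd, hde⟩ := hp e he
    have : (monomial e) (coeff e p) =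
        (monomial (e - d)) (coeff e p) * (monomial d (1:K)) := by
      rw [monomial_mul, mul_one, tsub_add_cancel_of_le hde]
    rw [this]
    exact Ideal.mul_mem_left _ _ (Ideal.subset_span ⟨d, hd, rfl⟩)

theorem coeff_mul_max (p q : MvPolynomial σ K) (dp dq : σ →₀ ℕ)
    (hp : ∀ e ∈ p.support, toLex e ≤ toLex dp)
    (hq : ∀ e ∈ q.support, toLex e ≤ toLex dq) :
    coeff (dp + dq) (p * q) = coeff dp p * coeff dq q := by
  classical
  rw [MvPolynomial.coeff_mul]
  apply Finset.sum_eq_single_of_mem (dp, dq) (by rw [Finset.HasAntidiagonal.mem_antidiagonal])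
  · rintro ⟨a, b⟩ hab hne
    rw [Finset.HasAntidiagonal.mem_antidiagonal] at hab
    by_cases ha : coeff a p = 0
    · simp [ha]
    by_cases hb : coeff b q = 0
    · simp [hb]
    have h1 : toLex a ≤ toLex dp := hp a (by rwa [MvPolynomial.mem_support_iff])
    have h2 : toLex b ≤ toLex dq := hq b (by rwa [MvPolynomial.mem_support_iff])
    exfalso
    rcases h1.lt_or_eq with h1 | h1
    · have : toLex (a + b) < toLex (dp + dq) := add_lt_add_of_lt_of_le h1 h2
      rw [hab] at this; exact lt_irrefl _ this
    · have ha' : a = dp := toLex.injective h1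
      have hb' : b = dq := by
        have := hab; rw [ha'] at this
        exact add_left_cancel this
      exact hne (by rw [ha', hb'])

theorem support_pow_max (p : MvPolynomial σ K) (dp : σ →₀ ℕ)
    (hp : ∀ e ∈ p.support, toLex e ≤ toLex dp) (N : ℕ) :
    ∀ e ∈ (p ^ N).support, toLex e ≤ toLex (N • dp) := by
  classical
  induction N with
  | zero =>
    intro e he
    simp only [pow_zero] at he
    have : e = 0 := by
      rw [MvPolynomial.mem_support_iff, MvPolynomial.coeff_one] at he
      by_contra hne
      simp [hne] at he
      exact hne he.symm
    simp [this]
  | succ N ih =>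
    intro e he
    rw [pow_succ] at he
    rcases Finset.mem_add.mp (MvPolynomial.support_mul _ _ he) with ⟨e1, h1, e2, h2, rfl⟩
    have : toLex (e1 + e2) = toLex e1 + toLex e2 := rfl
    rw [this, succ_nsmul]
    exact add_le_add (ih e1 h1) (hp e2 h2)

theorem coeff_pow_max (p : MvPolynomial σ K) (dp : σ →₀ ℕ)
    (hp : ∀ e ∈ p.support, toLex e ≤ toLex dp) (N : ℕ) :
    coeff (N • dp) (p ^ N) = (coeff dp p) ^ N := by
  induction N with
  | zero => simp
  | succ N ih =>
    rw [pow_succ, succ_nsmul, coeff_mul_max _ _ _ _ (support_pow_max p dp hp N) hp, ih, pow_succ]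

theorem monCrit_pow_mem (S : Set (σ →₀ ℕ)) (hS : ∀ d ∈ S, ∀ v, d v ≤ 1) :
    ∀ (k : ℕ) (p : MvPolynomial σ K), p.support.card ≤ k → ∀ N : ℕ, N ≠ 0 →
      p ^ N ∈ monCrit K S → p ∈ monCrit K S := by
  classical
  intro k
  induction k with
  | zero =>
    intro p hcard N _ _
    have : p = 0 := by
      rwa [Nat.le_zero, Finset.card_eq_zero, MvPolynomial.support_eq_empty] at hcard
    rw [this]; exact (monCrit K S).zero_mem
  | succ k ih =>
    intro p hcard N hN h
    by_cases hp0 : p = 0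
    · rw [hp0]; exact (monCrit K S).zero_mem
    have hne : p.support.Nonempty := by
      rwa [Finset.nonempty_iff_ne_empty, ne_eq, MvPolynomial.support_eq_empty]
    obtain ⟨d, hdmem, hdval⟩ := Finset.exists_mem_eq_sup' hne toLex
    have hmax : ∀ e ∈ p.support, toLex e ≤ toLex d := by
      intro e he
      rw [← hdval]
      exact Finset.le_sup' toLex he
    have hc : coeff d p ≠ 0 := MvPolynomial.mem_support_iff.mp hdmem
    have hcN : coeff (N • d) (p ^ N) ≠ 0 := by
      rw [coeff_pow_max p d hmax N]
      exact pow_ne_zero _ hc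
    obtain ⟨s, hsS, hs_le⟩ := h (N • d) (MvPolynomial.mem_support_iff.mpr hcN)
    have hsd : s ≤ d := by
      rw [Finsupp.le_def]
      intro v
      have h1 : s v ≤ 1 := hS s hsS v
      have h2 : s v ≤ N * d v := by
        have := Finsupp.le_def.mp hs_le v
        simpa using this
      rcases Nat.eq_zero_or_pos (d v) with h0 | h0
      · rw [h0, Nat.mul_zero] at h2; omega
      · omega
    have ht : (monomial d (coeff d p)) ∈ monCrit K S := by
      intro e he
      rw [MvPolynomial.support_monomial, if_neg hc, Finset.mem_singleton] at he
      exact ⟨s, hsS, he ▸ hsd⟩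
    set q := p - monomial d (coeff d p) with hq
    have hqsupp : q.support ⊆ p.support.erase d := by
      intro e he
      rw [MvPolynomial.mem_support_iff] at he
      have hcoe : coeff e q = coeff e p - (if d = e then coeff d p else 0) := by
        rw [hq, MvPolynomial.coeff_sub, MvPolynomial.coeff_monomial]
      by_cases hed : e = d
      · exfalso; rw [hcoe, if_pos hed.symm, hed, sub_self] at he; exact he rfl
      · rw [Finset.mem_erase]
        refine ⟨hed, MvPolynomial.mem_support_iff.mpr ?_⟩
        rw [hcoe, if_neg (fun hh => hed hh.symm), sub_zero] at he
        exact he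
    have hqcard : q.support.card ≤ k := by
      have h1 := Finset.card_le_card hqsupp
      have h2 := Finset.card_erase_of_mem hdmem
      have h3 : 1 ≤ p.support.card := Finset.card_pos.mpr hne
      omega
    have hqpow : q ^ N ∈ monCrit K S := by
      rw [← Ideal.Quotient.eq_zero_iff_mem]
      have : (Ideal.Quotient.mk (monCrit K S)) q = (Ideal.Quotient.mk (monCrit K S)) p := by
        rw [hq, map_sub, Ideal.Quotient.eq_zero_iff_mem.mpr ht, sub_zero]
      rw [map_pow, this, ← map_pow, Ideal.Quotient.eq_zero_iff_mem]
      exact h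
    have hqmem := ih q hqcard N hN hqpow
    have : p = q + monomial d (coeff d p) := by rw [hq]; ring
    rw [this]
    exact (monCrit K S).add_mem hqmem ht

theorem squarefree_monomial_radical (S : Set (σ →₀ ℕ)) (hS : ∀ d ∈ S, ∀ v, d v ≤ 1) :
    (Ideal.span ((fun d => (monomial d (1:K))) '' S)).radical =
      Ideal.span ((fun d => (monomial d (1:K))) '' S) := by
  apply le_antisymm _ Ideal.le_radical
  intro p hp
  obtain ⟨N, hpN⟩ := hp
  rcases Nat.eq_zero_or_pos N with h0 | h0
  · rw [h0, pow_zero] at hpN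
    exact Ideal.eq_top_iff_one _ |>.mpr hpN ▸ Submodule.mem_top
  · rw [monCrit_span_eq]
    rw [monCrit_span_eq] at hpN
    exact monCrit_pow_mem S hS p.support.card p le_rfl N (by omega) hpN

end SquarefreeRadical

lemma X_mul_X_eq (K : Type) [Field K] (n : ℕ) (i : ZMod n) :
    (X i * X (i+1) : MvPolynomial (ZMod n) K) =
      monomial (Finsupp.single i 1 + Finsupp.single (i+1) 1) 1 := by
  rw [MvPolynomial.X, MvPolynomial.X, monomial_mul, one_mul]

lemma cycleIdeal_radical (K : Type) [Field K] (n : ℕ) (hn : 3 ≤ n) :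
    (cycleIdeal K n).radical = cycleIdeal K n := by
  haveI : NeZero n := ⟨by omega⟩
  haveI : Fact (1 < n) := ⟨by omega⟩
  letI : LinearOrder (ZMod n) := LinearOrder.lift' ZMod.val (ZMod.val_injective n)
  have h1 : cycleIdeal K n = Ideal.span ((fun d => (monomial d (1:K))) ''
      (Set.range fun i : ZMod n => Finsupp.single i 1 + Finsupp.single (i+1) 1)) := by
    have hfun : (fun i : ZMod n => (X i * X (i+1) : MvPolynomial (ZMod n) K)) =
        (fun d => monomial d (1:K)) ∘
          (fun i : ZMod n => Finsupp.single i 1 + Finsupp.single (i+1) 1) :=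
      funext fun i => X_mul_X_eq K n i
    rw [cycleIdeal, hfun, Set.range_comp]
  rw [h1]
  apply squarefree_monomial_radical
  rintro _ ⟨i, rfl⟩ v
  have hne : i ≠ i + 1 := by
    intro h
    exact one_ne_zero (left_eq_add.mp h)
  by_cases h1 : i = v <;> by_cases h2 : i + 1 = v
  · exact absurd (h1.trans h2.symm) hne
  · simp [Finsupp.add_apply, Finsupp.single_apply, h1, h2]
  · simp [Finsupp.add_apply, Finsupp.single_apply, h1, h2]
  · simp [Finsupp.add_apply, Finsupp.single_apply, h1, h2]


section CycleLemmas
variable (K : Type) [Field K]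

lemma qZero_zero (n m : ℕ) : qZero K n m 0 = xv K n 1 * xv K n 2 := by simp [qZero]

lemma qZero_one (n m : ℕ) :
    qZero K n m 1 = xv K n 1 * xv K n (3*m) + xv K n 2 * xv K n 3 := by simp [qZero]

lemma qZero_even (n m k : ℕ) :
    qZero K n m (2*k) = xv K n (3*k+1) * xv K n (3*k+2) := by
  rcases Nat.eq_zero_or_pos k with rfl | hk
  · simp [qZero]
  · have h0 : 2*k ≠ 0 := by omega
    have h1 : 2*k ≠ 1 := by omega
    have h2 : 2*k % 2 = 0 := by omega
    have h3 : 2*k/2 = k := by omega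
    simp [qZero, h0, h1, h2, h3]

lemma qZero_odd (n m k : ℕ) (hk : 1 ≤ k) :
    qZero K n m (2*k+1) =
      xv K n (3*k) * xv K n (3*k+1) + xv K n (3*k+2) * xv K n (3*k+3) := by
  have h0 : 2*k+1 ≠ 0 := by omega
  have h1 : 2*k+1 ≠ 1 := by omega
  have h2 : ¬ ((2*k+1) % 2 = 0) := by omega
  have h3 : (2*k+1)/2 = k := by omega
  simp [qZero, h0, h1, h2, h3, show k ≠ 0 by omega]

lemma edge_mem (n : ℕ) (a : ℕ) : xv K n a * xv K n (a+1) ∈ cycleIdeal K n := by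
  apply Ideal.subset_span
  refine ⟨(a : ZMod n), ?_⟩
  simp only [xv]
  push_cast
  rfl

end CycleLemmas

/-- For `n = 3m`, the edge ideal of the `n`-cycle equals the radical of the ideal
generated by `q₀, …, q_{2m-1}`. -/
theorem cycle_zero_mod_three_radical (K : Type) [Field K] (m : ℕ) (hm : 1 ≤ m)
    (n : ℕ) (hn : n = 3 * m) :
    cycleIdeal K n =
      (Ideal.span (Set.range fun j : Fin (2 * m) => qZero K n m j.1)).radical := by
  haveI : NeZero n := ⟨by omega⟩
  set Q := Ideal.span (Set.range fun j : Fin (2 * m) => qZero K n m j.1) with hQdef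
  have hQ : ∀ jj : ℕ, jj < 2*m → qZero K n m jj ∈ Q :=
    fun jj h => Ideal.subset_span ⟨⟨jj, h⟩, rfl⟩
  have h3m : xv K n (3*m) = xv K n 0 := by
    have : ((3*m : ℕ) : ZMod n) = ((0:ℕ) : ZMod n) := by
      rw [← hn]; simp
    simp only [xv, this]
  -- every edge square is in Q
  have key : ∀ i : ZMod n, (X i * X (i+1) : MvPolynomial (ZMod n) K)^2 ∈ Q := by
    intro i
    have hjlt : i.val < n := ZMod.val_lt i
    have hi : ((i.val : ℕ) : ZMod n) = i := ZMod.natCast_rightInverse i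
    have hE : (X i * X (i+1) : MvPolynomial (ZMod n) K) =
        xv K n i.val * xv K n (i.val+1) := by
      simp only [xv]
      push_cast
      rw [hi]
    rw [hE]
    obtain ⟨k, r, hr3, hjkr⟩ : ∃ k r, r < 3 ∧ i.val = 3*k + r :=
      ⟨i.val/3, i.val%3, by omega, by omega⟩
    have hrc : r = 0 ∨ r = 1 ∨ r = 2 := by omega
    rcases hrc with rfl | rfl | rfl
    · -- r = 0
      rcases Nat.eq_zero_or_pos k with rfl | hk
      · -- k = 0 : edge xv 0 * xv 1
        have hj0 : i.val = 0 := by omega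
        rw [hj0]
        have h1 := hQ 1 (by omega)
        rw [qZero_one, h3m] at h1
        have h0 := hQ 0 (by omega)
        rw [qZero_zero] at h0
        have hid : (xv K n 0 * xv K n (0+1))^2 =
            (xv K n 0 * xv K n 1) * (xv K n 1 * xv K n 0 + xv K n 2 * xv K n 3)
              - (xv K n 0 * xv K n 3) * (xv K n 1 * xv K n 2) := by
          norm_num; ring
        rw [hid]
        exact sub_mem (Ideal.mul_mem_left _ _ h1) (Ideal.mul_mem_left _ _ h0)
      · have hkm : k < m := by omega
        have hodd := hQ (2*k+1) (by omega)
        rw [qZero_odd K n m k hk] at hodd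
        have heven := hQ (2*k) (by omega)
        rw [qZero_even] at heven
        rw [hjkr]
        have hid : (xv K n (3*k+0) * xv K n (3*k+0+1))^2 =
            (xv K n (3*k) * xv K n (3*k+1)) *
              (xv K n (3*k) * xv K n (3*k+1) + xv K n (3*k+2) * xv K n (3*k+3))
            - (xv K n (3*k) * xv K n (3*k+3)) * (xv K n (3*k+1) * xv K n (3*k+2)) := by
          norm_num; ring
        rw [hid]
        exact sub_mem (Ideal.mul_mem_left _ _ hodd) (Ideal.mul_mem_left _ _ heven)
    · -- r = 1
      have hkm : k < m := by omega
      have heven := hQ (2*k) (by omega)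
      rw [qZero_even] at heven
      rw [hjkr]
      have hid : (xv K n (3*k+1) * xv K n (3*k+1+1))^2 =
          (xv K n (3*k+1) * xv K n (3*k+2)) * (xv K n (3*k+1) * xv K n (3*k+2)) := by
        norm_num; ring
      rw [hid]
      exact Ideal.mul_mem_left _ _ heven
    · -- r = 2
      have hkm : k < m := by omega
      rw [hjkr]
      rcases Nat.eq_zero_or_pos k with rfl | hk
      · have h1 := hQ 1 (by omega)
        rw [qZero_one] at h1
        have h0 := hQ 0 (by omega)
        rw [qZero_zero] at h0
        have hid : (xv K n (3*0+2) * xv K n (3*0+2+1))^2 =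
            (xv K n 2 * xv K n 3) * (xv K n 1 * xv K n (3*m) + xv K n 2 * xv K n 3)
              - (xv K n 3 * xv K n (3*m)) * (xv K n 1 * xv K n 2) := by
          norm_num; ring
        rw [hid]
        exact sub_mem (Ideal.mul_mem_left _ _ h1) (Ideal.mul_mem_left _ _ h0)
      · have hodd := hQ (2*k+1) (by omega)
        rw [qZero_odd K n m k hk] at hodd
        have heven := hQ (2*k) (by omega)
        rw [qZero_even] at heven
        have hid : (xv K n (3*k+2) * xv K n (3*k+2+1))^2 =
            (xv K n (3*k+2) * xv K n (3*k+3)) *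
              (xv K n (3*k) * xv K n (3*k+1) + xv K n (3*k+2) * xv K n (3*k+3))
            - (xv K n (3*k) * xv K n (3*k+3)) * (xv K n (3*k+1) * xv K n (3*k+2)) := by
          norm_num; ring
        rw [hid]
        exact sub_mem (Ideal.mul_mem_left _ _ hodd) (Ideal.mul_mem_left _ _ heven)
  -- Q ⊆ cycleIdeal
  have hQI : Q ≤ cycleIdeal K n := by
    rw [hQdef, Ideal.span_le]
    rintro _ ⟨⟨jj, hjj⟩, rfl⟩
    simp only
    rcases Nat.even_or_odd jj with ⟨k, hk⟩ | ⟨k, hk⟩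
    · rw [show jj = 2*k by omega, qZero_even]
      exact edge_mem K n (3*k+1)
    · rw [show jj = 2*k+1 by omega]
      rcases Nat.eq_zero_or_pos k with rfl | hk1
      · rw [show 2*0+1 = 1 by omega, qZero_one]
        refine add_mem ?_ (edge_mem K n 2)
        rw [h3m, mul_comm]
        exact edge_mem K n 0
      · rw [qZero_odd K n m k hk1]
        exact add_mem (edge_mem K n (3*k)) (edge_mem K n (3*k+2))
  apply le_antisymm
  · rw [cycleIdeal, Ideal.span_le]
    rintro _ ⟨i, rfl⟩
    exact Ideal.mem_radical_iff.mpr ⟨2, key i⟩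
  · calc Q.radical ≤ (cycleIdeal K n).radical := Ideal.radical_mono hQI
      _ = cycleIdeal K n := cycleIdeal_radical K n (by omega)
end

section
/- Let $K$ be a field, $n = 3m$, and $R = K[x_1,\dots,x_n]$. Then the arithmetical rank of the edge ideal $I(C_n)$ of the $n$-cycle satisfies $\operatorname{ara}\, I(C_n) \leq 2m = \frac{2n}{3}$. -/
open MvPolynomial

noncomputable def ee (K : Type) [Field K] (n : ℕ) (a : ℕ) : MvPolynomial (ZMod n) K :=
  X (a : ZMod n) * X ((a + 1 : ℕ) : ZMod n)

lemma ee_mem_cycle (K : Type) [Field K] (n a : ℕ) : ee K n a ∈ cycleIdeal K n := by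
  refine Ideal.subset_span ⟨(a : ZMod n), ?_⟩
  simp only [ee]
  push_cast
  ring

lemma prod_identity (K : Type) [Field K] (n k : ℕ) :
    ee K n (3*k) * ee K n (3*k+2)
      = (X ((3*k : ℕ) : ZMod n) * X ((3*k+3 : ℕ) : ZMod n)) * ee K n (3*k+1) := by
  simp only [ee]
  push_cast
  ring

lemma cycle_exists (K : Type) [Field K] (m : ℕ) (hm : 1 ≤ m) (n : ℕ) (hn : n = 3 * m) :
    ∃ f : Fin (2*m) → MvPolynomial (ZMod n) K,
      (Ideal.span (Set.range f)).radical = (cycleIdeal K n).radical := by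
  classical
  haveI : NeZero n := ⟨by omega⟩
  refine ⟨fun j => if (j : ℕ) < m then ee K n (3*(j:ℕ)+1)
      else ee K n (3*((j:ℕ)-m)) + ee K n (3*((j:ℕ)-m)+2), ?_⟩
  set g : Fin (2*m) → MvPolynomial (ZMod n) K := fun j =>
    if (j : ℕ) < m then ee K n (3*(j:ℕ)+1)
      else ee K n (3*((j:ℕ)-m)) + ee K n (3*((j:ℕ)-m)+2) with hg
  set A : Ideal (MvPolynomial (ZMod n) K) := Ideal.span (Set.range g) with hA
  have hA1 : ∀ k, k < m → ee K n (3*k+1) ∈ A := by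
    intro k hk
    refine Ideal.subset_span ⟨⟨k, by omega⟩, ?_⟩
    simp [hg, hk]
  have hA2 : ∀ k, k < m → ee K n (3*k) + ee K n (3*k+2) ∈ A := by
    intro k hk
    refine Ideal.subset_span ⟨⟨m + k, by omega⟩, ?_⟩
    have h1 : ¬ (m + k < m) := by omega
    simp [hg, h1]
  have hsq0 : ∀ k, k < m → (ee K n (3*k))^2 ∈ A := by
    intro k hk
    have hid : (ee K n (3*k))^2
        = ee K n (3*k) * (ee K n (3*k) + ee K n (3*k+2))
          - (X ((3*k : ℕ) : ZMod n) * X ((3*k+3 : ℕ) : ZMod n)) * ee K n (3*k+1) := by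
      rw [← prod_identity]; ring
    rw [hid]
    exact sub_mem (Ideal.mul_mem_left _ _ (hA2 k hk)) (Ideal.mul_mem_left _ _ (hA1 k hk))
  have hsq2 : ∀ k, k < m → (ee K n (3*k+2))^2 ∈ A := by
    intro k hk
    have hid : (ee K n (3*k+2))^2
        = ee K n (3*k+2) * (ee K n (3*k) + ee K n (3*k+2))
          - (X ((3*k : ℕ) : ZMod n) * X ((3*k+3 : ℕ) : ZMod n)) * ee K n (3*k+1) := by
      rw [← prod_identity]; ring
    rw [hid]
    exact sub_mem (Ideal.mul_mem_left _ _ (hA2 k hk)) (Ideal.mul_mem_left _ _ (hA1 k hk))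
  have hfwd : cycleIdeal K n ≤ A.radical := by
    rw [cycleIdeal, Ideal.span_le]
    rintro _ ⟨i, rfl⟩
    have hlt : i.val < n := ZMod.val_lt i
    set k := i.val / 3 with hk'
    set r := i.val % 3 with hr'
    have hk : k < m := by omega
    have hval : i.val = 3*k + r := by omega
    have hi : i = ((3*k + r : ℕ) : ZMod n) := by
      rw [← hval]
      simp [ZMod.natCast_val, ZMod.cast_id]
    have hX : (fun i : ZMod n => X i * X (i + 1)) i = ee K n (3*k+r) := by
      simp only [ee, hi]
      push_cast
      ring
    rw [hX]
    have hr : r < 3 := by omega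
    interval_cases r
    · exact ⟨2, by simpa using hsq0 k hk⟩
    · exact Ideal.le_radical (hA1 k hk)
    · exact ⟨2, hsq2 k hk⟩
  have hbwd : A ≤ (cycleIdeal K n).radical := by
    rw [hA, Ideal.span_le]
    rintro _ ⟨j, rfl⟩
    apply Ideal.le_radical
    by_cases h : (j : ℕ) < m
    · simp only [hg, if_pos h]
      exact ee_mem_cycle K n _
    · simp only [hg, if_neg h]
      exact add_mem (ee_mem_cycle K n _) (ee_mem_cycle K n _)
  apply le_antisymm
  · have := Ideal.radical_mono hbwd
    rwa [Ideal.radical_idem] at this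
  · have := Ideal.radical_mono hfwd
    rwa [Ideal.radical_idem] at this

/-- For `n = 3m`, the arithmetical rank of the edge ideal of the `n`-cycle is at most
`2m = 2n/3`. -/
theorem cycle_zero_mod_three_ara_le (K : Type) [Field K] (m : ℕ) (hm : 1 ≤ m)
    (n : ℕ) (hn : n = 3 * m) :
    araRank (cycleIdeal K n) ≤ 2 * m ∧ 2 * m = 2 * n / 3 := by
  constructor
  · exact Nat.sInf_le (cycle_exists K m hm n hn)
  · omega
end

section
/- Let $K$ be a field, $n = 3m+1$ for an integer $m \geq 1$, and $R = K[x_1,\dots,x_n]$. Define $q_0 = x_1x_2$, $q_1 = x_1x_{3m+1} + x_2x_3$, for $1 \leq i \leq m-1$: $q_{2i} = x_{3i+1}x_{3i+2}$ and $q_{2i+1} = x_{3i}x_{3i+1} + x_{3i+2}x_{3i+3}$, and finally $q_{2m} = x_{3m}x_{3m+1}$. Then $I(C_n) = \sqrt{(q_0, \dots, q_{2m})}$; in particular $\operatorname{ara}\, I(C_n) \leq 2m+1$. -/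
open MvPolynomial

/-- The elements `q₀,…,q_{2m}` for the cycle `C_n`, `n = 3m+1`:
`q₀ = x₁x₂`, `q₁ = x₁x_{3m+1} + x₂x₃`, for `1 ≤ i ≤ m-1`
`q_{2i} = x_{3i+1}x_{3i+2}`, `q_{2i+1} = x_{3i}x_{3i+1} + x_{3i+2}x_{3i+3}`,
and finally `q_{2m} = x_{3m}x_{3m+1}`. -/
noncomputable def qOne (K : Type) [Field K] (n m : ℕ) (j : ℕ) : MvPolynomial (ZMod n) K :=
  if j = 0 then xv K n 1 * xv K n 2
  else if j = 1 then xv K n 1 * xv K n (3 * m + 1) + xv K n 2 * xv K n 3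
  else if j = 2 * m then xv K n (3 * m) * xv K n (3 * m + 1)
  else if j % 2 = 0 then xv K n (3 * (j / 2) + 1) * xv K n (3 * (j / 2) + 2)
  else xv K n (3 * (j / 2)) * xv K n (3 * (j / 2) + 1) +
    xv K n (3 * (j / 2) + 2) * xv K n (3 * (j / 2) + 3)

lemma radical_trick {R : Type*} [CommRing R] {J : Ideal R} {a b : R}
    (hab : a + b ∈ J) (hmul : a * b ∈ J) : a ∈ J.radical ∧ b ∈ J.radical := by
  constructor
  · refine ⟨2, ?_⟩
    have h : a ^ 2 = a * (a + b) - a * b := by ring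
    rw [h]
    exact Ideal.sub_mem _ (Ideal.mul_mem_left _ _ hab) hmul
  · refine ⟨2, ?_⟩
    have h : b ^ 2 = b * (a + b) - a * b := by ring
    rw [h]
    exact Ideal.sub_mem _ (Ideal.mul_mem_left _ _ hab) hmul

lemma sqfree_radical_le {σ K : Type} [LinearOrder σ] [Field K] {S : Set (σ →₀ ℕ)}
    (hS : ∀ s ∈ S, ∀ j, s j ≤ 1) :
    (Ideal.span ((fun s => (monomial s (1 : K) : MvPolynomial σ K)) '' S)).radical ≤
      Ideal.span ((fun s => (monomial s (1 : K) : MvPolynomial σ K)) '' S) := by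
  intro f hf
  obtain ⟨k, hfk⟩ := Ideal.mem_radical_iff.mp hf
  rcases Nat.eq_zero_or_pos k with rfl | hk
  · rw [pow_zero] at hfk
    have htop : Ideal.span ((fun s => (monomial s (1 : K) : MvPolynomial σ K)) '' S) = ⊤ :=
      (Ideal.eq_top_iff_one _).mpr hfk
    rw [htop]; trivial
  classical
  set B : Finset (σ →₀ ℕ) := f.support.filter (fun d => ∀ s ∈ S, ¬ s ≤ d) with hB
  set h : MvPolynomial σ K := ∑ d ∈ B, monomial d (coeff d f) with hh
  have hch : ∀ e, coeff e h = if e ∈ B then coeff e f else 0 := by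
    intro e
    rw [hh, coeff_sum]
    simp only [coeff_monomial]
    exact Finset.sum_ite_eq' B e (fun d => coeff d f)
  have hfh : f - h ∈ Ideal.span ((fun s => (monomial s (1 : K) : MvPolynomial σ K)) '' S) := by
    rw [mem_ideal_span_monomial_image]
    intro e he
    rw [mem_support_iff, coeff_sub, hch] at he
    by_cases heB : e ∈ B
    · rw [if_pos heB, sub_self] at he; exact absurd rfl he
    · rw [if_neg heB, sub_zero] at he
      have hef : e ∈ f.support := mem_support_iff.mpr he
      rw [hB, Finset.mem_filter] at heB
      push_neg at heB
      exact heB hef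
  have hhk : h ^ k ∈ Ideal.span ((fun s => (monomial s (1 : K) : MvPolynomial σ K)) '' S) := by
    set I := Ideal.span ((fun s => (monomial s (1 : K) : MvPolynomial σ K)) '' S)
    have hq : Ideal.Quotient.mk I h = Ideal.Quotient.mk I f := by
      rw [Ideal.Quotient.mk_eq_mk_iff_sub_mem]
      have : h - f = -(f - h) := by ring
      rw [this]
      exact neg_mem hfh
    rw [← Ideal.Quotient.eq_zero_iff_mem, map_pow, hq, ← map_pow,
      Ideal.Quotient.eq_zero_iff_mem]
    exact hfk
  have hsup : h.support ⊆ B := by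
    intro e he
    rw [mem_support_iff, hch] at he
    by_contra hc
    rw [if_neg hc] at he
    exact he rfl
  suffices hBe : B = ∅ by
    have h0 : h = 0 := by rw [hh, hBe, Finset.sum_empty]
    rw [h0, sub_zero] at hfh
    exact hfh
  by_contra hBne
  obtain ⟨d₀, hd₀⟩ := Finset.nonempty_iff_ne_empty.mpr hBne
  have hd₀f : d₀ ∈ f.support := (Finset.mem_filter.mp (hB ▸ hd₀)).1
  have hh0 : h ≠ 0 := by
    intro h0
    have hc := hch d₀
    rw [h0, if_pos hd₀] at hc
    exact mem_support_iff.mp hd₀f (by simpa using hc.symm)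
  set D : (σ →₀ ℕ) → Lex (σ →₀ ℕ) := ⇑(toLex (α := σ →₀ ℕ)) with hD
  have hDinj : Function.Injective D := (toLex : (σ →₀ ℕ) ≃ Lex (σ →₀ ℕ)).injective
  have hadd : ∀ a b : (σ →₀ ℕ), D (a + b) = D a + D b := fun _ _ => rfl
  have lcpow : ∀ j : ℕ, AddMonoidAlgebra.leadingCoeff D (h ^ j) =
      (AddMonoidAlgebra.leadingCoeff D h) ^ j := by
    intro j
    induction j with
    | zero =>
        rw [pow_zero, pow_zero]
        exact AddMonoidAlgebra.monic_one hDinj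
    | succ j ih =>
        rw [pow_succ, pow_succ, AddMonoidAlgebra.leadingCoeff_mul hDinj hadd, ih]
  have hlc : AddMonoidAlgebra.leadingCoeff D h ≠ 0 :=
    (AddMonoidAlgebra.leadingCoeff_ne_zero hDinj).mpr hh0
  have hpow0 : ∀ j : ℕ, h ^ j ≠ 0 := by
    intro j
    apply (AddMonoidAlgebra.leadingCoeff_ne_zero hDinj).mp
    rw [lcpow]
    exact pow_ne_zero _ hlc
  have sdpow : ∀ j : ℕ, 1 ≤ j → AddMonoidAlgebra.supDegree D (h ^ j) =
      j • AddMonoidAlgebra.supDegree D h := by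
    intro j hj
    induction j with
    | zero => omega
    | succ j ih =>
        rcases Nat.eq_zero_or_pos j with rfl | hj'
        · rw [pow_one]
          simp
        · rw [pow_succ, AddMonoidAlgebra.supDegree_mul hDinj hadd ?_ (hpow0 j) hh0, ih hj',
            succ_nsmul]
          rw [lcpow]
          exact mul_ne_zero (pow_ne_zero _ hlc) hlc
  have hdsup : Function.invFun D (AddMonoidAlgebra.supDegree D h) ∈ h.support :=
    AddMonoidAlgebra.supDegree_mem_support hDinj hh0
  set d : σ →₀ ℕ := Function.invFun D (AddMonoidAlgebra.supDegree D h) with hd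
  have hdD : D d = AddMonoidAlgebra.supDegree D h :=
    Function.rightInverse_invFun (toLex (α := σ →₀ ℕ)).surjective _
  set e : σ →₀ ℕ := Function.invFun D (AddMonoidAlgebra.supDegree D (h ^ k)) with he
  have hesup : e ∈ (h ^ k).support :=
    AddMonoidAlgebra.supDegree_mem_support hDinj (hpow0 k)
  have heD : D e = AddMonoidAlgebra.supDegree D (h ^ k) :=
    Function.rightInverse_invFun (toLex (α := σ →₀ ℕ)).surjective _
  have hsmul : ∀ (c : ℕ) (x : σ →₀ ℕ), D (c • x) = c • D x := by
    intro c x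
    induction c with
    | zero => rw [zero_nsmul, zero_nsmul]; rfl
    | succ c ih => rw [succ_nsmul, succ_nsmul, hadd, ih]
  have hekd : e = k • d := by
    apply hDinj
    rw [heD, sdpow k hk, ← hdD, ← hsmul]
  rw [mem_ideal_span_monomial_image] at hhk
  obtain ⟨s, hsS, hse⟩ := hhk e hesup
  have hsd : s ≤ d := by
    rw [hekd] at hse
    rw [Finsupp.le_def]
    intro jj
    have h1 := Finsupp.le_def.mp hse jj
    rw [Finsupp.smul_apply, smul_eq_mul] at h1
    have h2 := hS s hsS jj
    rcases Nat.eq_zero_or_pos (d jj) with h3 | h3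
    · rw [h3, Nat.mul_zero] at h1; omega
    · exact le_trans h2 h3
  have hdB := hsup hdsup
  rw [hB, Finset.mem_filter] at hdB
  exact hdB.2 s hsS hsd

/-- For `n = 3m+1`, the edge ideal of the `n`-cycle equals the radical of the ideal
generated by `q₀, …, q_{2m}`; in particular `ara I(Cₙ) ≤ 2m + 1`. -/
theorem cycle_one_mod_three_radical (K : Type) [Field K] (m : ℕ) (hm : 1 ≤ m)
    (n : ℕ) (hn : n = 3 * m + 1) :
    cycleIdeal K n =
        (Ideal.span (Set.range fun j : Fin (2 * m + 1) => qOne K n m j.1)).radical ∧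
      araRank (cycleIdeal K n) ≤ 2 * m + 1 := by
  subst hn
  haveI : NeZero (3 * m + 1) := ⟨by omega⟩
  haveI : Fact (1 < 3 * m + 1) := ⟨by omega⟩
  letI : LinearOrder (ZMod (3 * m + 1)) :=
    LinearOrder.lift' ZMod.val (ZMod.val_injective _)
  set J : Ideal (MvPolynomial (ZMod (3 * m + 1)) K) :=
    Ideal.span (Set.range fun j : Fin (2 * m + 1) => qOne K (3 * m + 1) m j.1) with hJ
  -- membership of edges in the cycle ideal
  have edge_mem : ∀ a b : ℕ, b = a + 1 →
      xv K (3 * m + 1) a * xv K (3 * m + 1) b ∈ cycleIdeal K (3 * m + 1) := by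
    intro a b hb
    subst hb
    apply Ideal.subset_span
    refine ⟨(a : ZMod (3 * m + 1)), ?_⟩
    show X (a : ZMod (3 * m + 1)) * X ((a : ZMod (3 * m + 1)) + 1) = _
    rw [xv, xv]
    push_cast
    ring
  have hq1a : xv K (3 * m + 1) 1 * xv K (3 * m + 1) (3 * m + 1) ∈ cycleIdeal K (3 * m + 1) := by
    apply Ideal.subset_span
    refine ⟨(0 : ZMod (3 * m + 1)), ?_⟩
    show X (0 : ZMod (3 * m + 1)) * X ((0 : ZMod (3 * m + 1)) + 1) = _
    rw [xv, xv, ZMod.natCast_self]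
    push_cast
    ring
  have hq_mem : ∀ t : ℕ, qOne K (3 * m + 1) m t ∈ cycleIdeal K (3 * m + 1) := by
    intro t
    unfold qOne
    split_ifs with h0 h1 h2 h3
    · exact edge_mem 1 2 (by omega)
    · exact Ideal.add_mem _ hq1a (edge_mem 2 3 (by omega))
    · exact edge_mem (3 * m) (3 * m + 1) (by omega)
    · exact edge_mem _ _ (by omega)
    · exact Ideal.add_mem _ (edge_mem _ _ (by omega)) (edge_mem _ _ (by omega))
  have hJle : J ≤ cycleIdeal K (3 * m + 1) := by
    rw [hJ, Ideal.span_le]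
    rintro _ ⟨j, rfl⟩
    exact hq_mem j.1
  -- membership of q's in J
  have qmemJ : ∀ t : ℕ, t < 2 * m + 1 → qOne K (3 * m + 1) m t ∈ J :=
    fun t ht => Ideal.subset_span ⟨⟨t, ht⟩, rfl⟩
  -- evaluation of qOne
  have q0eval : qOne K (3 * m + 1) m 0 = xv K (3 * m + 1) 1 * xv K (3 * m + 1) 2 := by
    unfold qOne; rw [if_pos rfl]
  have q1eval : qOne K (3 * m + 1) m 1 =
      xv K (3 * m + 1) 1 * xv K (3 * m + 1) (3 * m + 1)
        + xv K (3 * m + 1) 2 * xv K (3 * m + 1) 3 := by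
    unfold qOne; rw [if_neg (by omega), if_pos rfl]
  have q2meval : qOne K (3 * m + 1) m (2 * m) =
      xv K (3 * m + 1) (3 * m) * xv K (3 * m + 1) (3 * m + 1) := by
    unfold qOne; rw [if_neg (by omega), if_neg (by omega), if_pos rfl]
  have qeven : ∀ i : ℕ, 1 ≤ i → i ≤ m - 1 → qOne K (3 * m + 1) m (2 * i) =
      xv K (3 * m + 1) (3 * i + 1) * xv K (3 * m + 1) (3 * i + 2) := by
    intro i h1 h2
    unfold qOne
    rw [if_neg (by omega), if_neg (by omega), if_neg (by omega), if_pos (by omega)]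
    have hdiv : 2 * i / 2 = i := by omega
    rw [hdiv]
  have qodd : ∀ i : ℕ, 1 ≤ i → i ≤ m - 1 → qOne K (3 * m + 1) m (2 * i + 1) =
      xv K (3 * m + 1) (3 * i) * xv K (3 * m + 1) (3 * i + 1)
        + xv K (3 * m + 1) (3 * i + 2) * xv K (3 * m + 1) (3 * i + 3) := by
    intro i h1 h2
    unfold qOne
    rw [if_neg (by omega), if_neg (by omega), if_neg (by omega), if_neg (by omega)]
    have hdiv : (2 * i + 1) / 2 = i := by omega
    rw [hdiv]
  -- the q1 trick pair
  have habJ : xv K (3 * m + 1) 1 * xv K (3 * m + 1) (3 * m + 1)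
      + xv K (3 * m + 1) 2 * xv K (3 * m + 1) 3 ∈ J := q1eval ▸ qmemJ 1 (by omega)
  have hmulJ : (xv K (3 * m + 1) 1 * xv K (3 * m + 1) (3 * m + 1))
      * (xv K (3 * m + 1) 2 * xv K (3 * m + 1) 3) ∈ J := by
    have he : (xv K (3 * m + 1) 1 * xv K (3 * m + 1) (3 * m + 1))
        * (xv K (3 * m + 1) 2 * xv K (3 * m + 1) 3)
        = (xv K (3 * m + 1) (3 * m + 1) * xv K (3 * m + 1) 3) * qOne K (3 * m + 1) m 0 := by
      rw [q0eval]; ring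
    rw [he]
    exact Ideal.mul_mem_left _ _ (qmemJ 0 (by omega))
  -- main case analysis
  have main : ∀ j : ℕ, 1 ≤ j → j ≤ 3 * m + 1 →
      xv K (3 * m + 1) j * xv K (3 * m + 1) (j + 1) ∈ J.radical := by
    intro j hj1 hj2
    by_cases h1 : j = 1
    · subst h1
      have e2 : (1 + 1 : ℕ) = 2 := by omega
      rw [e2, ← q0eval]
      exact Ideal.le_radical (qmemJ 0 (by omega))
    by_cases h2 : j = 2
    · subst h2
      have e3 : (2 + 1 : ℕ) = 3 := by omega
      rw [e3]
      exact (radical_trick habJ hmulJ).2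
    by_cases h3 : j = 3 * m
    · subst h3
      rw [← q2meval]
      exact Ideal.le_radical (qmemJ (2 * m) (by omega))
    by_cases h4 : j = 3 * m + 1
    · subst h4
      have hx : xv K (3 * m + 1) (3 * m + 1 + 1) = xv K (3 * m + 1) 1 := by
        rw [xv, xv]
        congr 1
        rw [Nat.cast_add, ZMod.natCast_self, zero_add]
      rw [hx, show xv K (3 * m + 1) (3 * m + 1) * xv K (3 * m + 1) 1
        = xv K (3 * m + 1) 1 * xv K (3 * m + 1) (3 * m + 1) from mul_comm _ _]
      exact (radical_trick habJ hmulJ).1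
    rcases (show j % 3 = 0 ∨ j % 3 = 1 ∨ j % 3 = 2 by omega) with hr | hr | hr
    · -- j = 3i
      set i := j / 3 with hi
      have hji : j = 3 * i := by omega
      have hi1 : 1 ≤ i := by omega
      have hi2 : i ≤ m - 1 := by omega
      have habJ' : xv K (3 * m + 1) (3 * i) * xv K (3 * m + 1) (3 * i + 1)
          + xv K (3 * m + 1) (3 * i + 2) * xv K (3 * m + 1) (3 * i + 3) ∈ J :=
        (qodd i hi1 hi2) ▸ qmemJ (2 * i + 1) (by omega)
      have hmulJ' : (xv K (3 * m + 1) (3 * i) * xv K (3 * m + 1) (3 * i + 1))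
          * (xv K (3 * m + 1) (3 * i + 2) * xv K (3 * m + 1) (3 * i + 3)) ∈ J := by
        have he : (xv K (3 * m + 1) (3 * i) * xv K (3 * m + 1) (3 * i + 1))
            * (xv K (3 * m + 1) (3 * i + 2) * xv K (3 * m + 1) (3 * i + 3))
            = (xv K (3 * m + 1) (3 * i) * xv K (3 * m + 1) (3 * i + 3))
              * qOne K (3 * m + 1) m (2 * i) := by
          rw [qeven i hi1 hi2]; ring
        rw [he]
        exact Ideal.mul_mem_left _ _ (qmemJ (2 * i) (by omega))
      rw [hji]
      exact (radical_trick habJ' hmulJ').1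
    · -- j = 3i+1
      set i := j / 3 with hi
      have hji : j = 3 * i + 1 := by omega
      have hi1 : 1 ≤ i := by omega
      have hi2 : i ≤ m - 1 := by omega
      rw [hji]
      have e : (3 * i + 1 + 1 : ℕ) = 3 * i + 2 := by omega
      rw [e, ← qeven i hi1 hi2]
      exact Ideal.le_radical (qmemJ (2 * i) (by omega))
    · -- j = 3i+2
      set i := j / 3 with hi
      have hji : j = 3 * i + 2 := by omega
      have hi1 : 1 ≤ i := by omega
      have hi2 : i ≤ m - 1 := by omega
      have habJ' : xv K (3 * m + 1) (3 * i) * xv K (3 * m + 1) (3 * i + 1)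
          + xv K (3 * m + 1) (3 * i + 2) * xv K (3 * m + 1) (3 * i + 3) ∈ J :=
        (qodd i hi1 hi2) ▸ qmemJ (2 * i + 1) (by omega)
      have hmulJ' : (xv K (3 * m + 1) (3 * i) * xv K (3 * m + 1) (3 * i + 1))
          * (xv K (3 * m + 1) (3 * i + 2) * xv K (3 * m + 1) (3 * i + 3)) ∈ J := by
        have he : (xv K (3 * m + 1) (3 * i) * xv K (3 * m + 1) (3 * i + 1))
            * (xv K (3 * m + 1) (3 * i + 2) * xv K (3 * m + 1) (3 * i + 3))
            = (xv K (3 * m + 1) (3 * i) * xv K (3 * m + 1) (3 * i + 3))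
              * qOne K (3 * m + 1) m (2 * i) := by
          rw [qeven i hi1 hi2]; ring
        rw [he]
        exact Ideal.mul_mem_left _ _ (qmemJ (2 * i) (by omega))
      rw [hji]
      have e : (3 * i + 2 + 1 : ℕ) = 3 * i + 3 := by omega
      rw [e]
      exact (radical_trick habJ' hmulJ').2
  -- cycle ideal is below the radical of J
  have hcyc_le : cycleIdeal K (3 * m + 1) ≤ J.radical := by
    rw [cycleIdeal, Ideal.span_le]
    rintro _ ⟨i, rfl⟩
    show X i * X (i + 1) ∈ J.radical
    by_cases hi0 : i = 0
    · subst hi0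
      have := main (3 * m + 1) (by omega) (le_refl _)
      have e1 : xv K (3 * m + 1) (3 * m + 1) = X (0 : ZMod (3 * m + 1)) := by
        rw [xv]; exact congrArg X (ZMod.natCast_self _)
      have e2 : xv K (3 * m + 1) (3 * m + 1 + 1) = X ((0 : ZMod (3 * m + 1)) + 1) := by
        rw [xv]
        congr 1
        rw [Nat.cast_add, ZMod.natCast_self, Nat.cast_one]
      rwa [e1, e2] at this
    · have hv1 : 1 ≤ i.val := by
        rcases Nat.eq_zero_or_pos i.val with h | h
        · exact absurd ((ZMod.val_eq_zero i).mp h) hi0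
        · exact h
      have hv2 : i.val ≤ 3 * m + 1 := le_of_lt (ZMod.val_lt i)
      have := main i.val hv1 hv2
      have e1 : xv K (3 * m + 1) i.val = X i := by
        rw [xv]; exact congrArg X (ZMod.natCast_rightInverse i)
      have e2 : xv K (3 * m + 1) (i.val + 1) = X (i + 1) := by
        rw [xv]
        congr 1
        push_cast
        rw [ZMod.natCast_rightInverse i]
      rwa [e1, e2] at this
  -- monomial presentation of the cycle ideal
  have hmono : cycleIdeal K (3 * m + 1) = Ideal.span ((fun s => (monomial s (1 : K))) ''
      (Set.range (fun i : ZMod (3 * m + 1) =>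
        Finsupp.single i 1 + Finsupp.single (i + 1) 1))) := by
    rw [cycleIdeal, ← Set.range_comp]
    congr 1
    apply congrArg
    funext i
    show X i * X (i + 1) = monomial (Finsupp.single i 1 + Finsupp.single (i + 1) 1) (1 : K)
    have hX : ∀ a : ZMod (3 * m + 1),
        (X a : MvPolynomial (ZMod (3 * m + 1)) K) = monomial (Finsupp.single a 1) 1 := fun _ => rfl
    rw [hX, hX, monomial_mul, one_mul]
  have hradical : (cycleIdeal K (3 * m + 1)).radical = cycleIdeal K (3 * m + 1) := by
    rw [hmono]
    refine le_antisymm (sqfree_radical_le ?_) Ideal.le_radical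
    rintro s ⟨i, rfl⟩ jj
    have hne : i ≠ i + 1 := by
      intro hcon
      exact one_ne_zero (left_eq_add.mp hcon)
    rw [Finsupp.add_apply, Finsupp.single_apply, Finsupp.single_apply]
    split_ifs with ha hb hb
    · exact absurd (ha.trans hb.symm) hne
    · omega
    · omega
    · omega
  have heq : cycleIdeal K (3 * m + 1) = J.radical := by
    refine le_antisymm hcyc_le ?_
    calc J.radical ≤ (cycleIdeal K (3 * m + 1)).radical := Ideal.radical_mono hJle
      _ = cycleIdeal K (3 * m + 1) := hradical
  refine ⟨heq, ?_⟩
  apply Nat.sInf_le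
  refine ⟨fun j : Fin (2 * m + 1) => qOne K (3 * m + 1) m j.1, ?_⟩
  rw [← hJ, hradical]
  exact heq.symm
end

section
/- Let $K$ be a field, $n = 3m+2$ for an integer $m \geq 1$, and $R = K[x_1,\dots,x_n]$. Define $q_0 = x_1x_2$, $q_1 = x_2x_3 + x_4x_5$, for $1 \leq i \leq m-1$: $q_{2i} = x_{3i}x_{3i+1} + x_{3i+2}x_{3i+3}$ and $q_{2i+1} = x_{3i+2}x_{3i+3} + x_{3i+4}x_{3i+5}$, and finally $q_{2m} = x_1x_{3m+2} + x_{3m}x_{3m+1}$. Then $I(C_n) = \sqrt{(q_0, \dots, q_{2m})}$; in particular $\operatorname{ara}\, I(C_n) \leq 2m+1$. -/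
open MvPolynomial

/-- The elements `q₀,…,q_{2m}` for the cycle `C_n`, `n = 3m+2`:
`q₀ = x₁x₂`, `q₁ = x₂x₃ + x₄x₅`, for `1 ≤ i ≤ m-1`
`q_{2i} = x_{3i}x_{3i+1} + x_{3i+2}x_{3i+3}`, `q_{2i+1} = x_{3i+2}x_{3i+3} + x_{3i+4}x_{3i+5}`,
and finally `q_{2m} = x₁x_{3m+2} + x_{3m}x_{3m+1}`. -/
noncomputable def qTwo (K : Type) [Field K] (n m : ℕ) (j : ℕ) : MvPolynomial (ZMod n) K :=
  if j = 0 then xv K n 1 * xv K n 2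
  else if j = 1 then xv K n 2 * xv K n 3 + xv K n 4 * xv K n 5
  else if j = 2 * m then xv K n 1 * xv K n (3 * m + 2) + xv K n (3 * m) * xv K n (3 * m + 1)
  else if j % 2 = 0 then xv K n (3 * (j / 2)) * xv K n (3 * (j / 2) + 1) +
    xv K n (3 * (j / 2) + 2) * xv K n (3 * (j / 2) + 3)
  else xv K n (3 * (j / 2) + 2) * xv K n (3 * (j / 2) + 3) +
    xv K n (3 * (j / 2) + 4) * xv K n (3 * (j / 2) + 5)


section Aux
variable {K : Type} [Field K] {σ : Type*}

/-- applying the "kill variables in S" map -/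
noncomputable def killS (S : Set σ) [DecidablePred (· ∈ S)] :
    MvPolynomial σ K →ₐ[K] MvPolynomial σ K :=
  aeval (fun i => if i ∈ S then 0 else X i)

lemma killS_monomial_avoid (S : Set σ) [DecidablePred (· ∈ S)] (ν : σ →₀ ℕ) (c : K)
    (h : ∀ i ∈ S, ν i = 0) : killS (K := K) S (monomial ν c) = monomial ν c := by
  rw [killS, aeval_monomial, monomial_eq]
  congr 1
  apply Finsupp.prod_congr
  intro i hi
  rw [if_neg]
  intro hiS
  exact (Finsupp.mem_support_iff.mp hi) (h i hiS)

lemma killS_monomial_hit (S : Set σ) [DecidablePred (· ∈ S)] (ν : σ →₀ ℕ) (c : K)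
    (i : σ) (hiS : i ∈ S) (hi : ν i ≠ 0) : killS (K := K) S (monomial ν c) = 0 := by
  rw [killS, aeval_monomial]
  rw [Finsupp.prod]
  have : ∏ j ∈ ν.support, (if j ∈ S then (0 : MvPolynomial σ K) else X j) ^ ν j = 0 := by
    apply Finset.prod_eq_zero (Finsupp.mem_support_iff.mpr hi)
    rw [if_pos hiS, zero_pow hi]
  rw [this, mul_zero]

lemma mem_span_X_iff_killS (S : Set σ) [DecidablePred (· ∈ S)] (f : MvPolynomial σ K) :
    f ∈ Ideal.span (X '' S : Set (MvPolynomial σ K)) ↔ killS (K := K) S f = 0 := by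
  constructor
  · intro hf
    have hle : Ideal.span (X '' S : Set (MvPolynomial σ K)) ≤ RingHom.ker (killS (K := K) S) := by
      rw [Ideal.span_le]
      rintro _ ⟨i, hiS, rfl⟩
      simp [RingHom.mem_ker, killS, hiS]
    exact hle hf
  · intro hf
    classical
    by_contra hmem
    rw [mem_ideal_span_X_image] at hmem
    push_neg at hmem
    obtain ⟨μ, hμ, hav⟩ := hmem
    have hc : coeff μ (killS (K := K) S f) = coeff μ f := by
      conv_lhs => rw [← support_sum_monomial_coeff f]
      rw [map_sum]
      rw [coeff_sum]
      rw [Finset.sum_eq_single μ]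
      · rw [killS_monomial_avoid S μ _ hav, coeff_monomial, if_pos rfl]
      · intro ν hν hne
        by_cases hhit : ∃ i ∈ S, ν i ≠ 0
        · obtain ⟨i, hiS, hi⟩ := hhit
          rw [killS_monomial_hit S ν _ i hiS hi, coeff_zero]
        · push_neg at hhit
          rw [killS_monomial_avoid S ν _ hhit, coeff_monomial, if_neg hne]
      · intro h; exact absurd hμ h
    rw [hf] at hc
    simp only [coeff_zero] at hc
    exact (mem_support_iff.mp hμ) hc.symm

lemma isPrime_span_X (S : Set σ) :
    (Ideal.span (X '' S : Set (MvPolynomial σ K))).IsPrime := by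
  classical
  constructor
  · intro htop
    have h1 : (1 : MvPolynomial σ K) ∈ Ideal.span (X '' S : Set (MvPolynomial σ K)) :=
      htop ▸ Submodule.mem_top
    rw [mem_span_X_iff_killS, map_one] at h1
    exact one_ne_zero h1
  · intro f g hfg
    rw [mem_span_X_iff_killS] at hfg
    rw [mem_span_X_iff_killS, mem_span_X_iff_killS]
    rw [map_mul] at hfg
    exact mul_eq_zero.mp hfg



end Aux

variable {K : Type} [Field K]



lemma monomial_mem_cycle {n : ℕ} (hn5 : 5 ≤ n) (μ : ZMod n →₀ ℕ) (c : K) (i : ZMod n)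
    (h1 : μ i ≠ 0) (h2 : μ (i + 1) ≠ 0) : monomial μ c ∈ cycleIdeal K n := by
  classical
  haveI : Fact (1 < n) := ⟨by omega⟩
  have hne : i ≠ i + 1 := by
    intro h
    exact one_ne_zero (left_eq_add.mp h)
  have hind : μ - Finsupp.single i 1 - Finsupp.single (i + 1) 1 +
      (Finsupp.single i 1 + Finsupp.single (i + 1) 1) = μ := by
    ext j
    simp only [Finsupp.add_apply, Finsupp.tsub_apply, Finsupp.single_apply]
    split_ifs with ha hb hb
    · exact absurd (ha.trans hb.symm) hne
    · subst ha
      have := Nat.one_le_iff_ne_zero.mpr h1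
      omega
    · subst hb
      have := Nat.one_le_iff_ne_zero.mpr h2
      omega
    · omega
  have key : monomial μ c =
      monomial (μ - Finsupp.single i 1 - Finsupp.single (i + 1) 1) c * (X i * X (i + 1)) := by
    rw [X, X, monomial_mul, monomial_mul, hind, mul_one, mul_one]
  rw [key]
  exact Ideal.mul_mem_left _ _ (Ideal.subset_span ⟨i, rfl⟩)

lemma mem_cycle_of_forall_cover {n : ℕ} (hn5 : 5 ≤ n) (f : MvPolynomial (ZMod n) K)
    (hf : ∀ S : Set (ZMod n), (∀ i : ZMod n, i ∈ S ∨ i + 1 ∈ S) →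
      f ∈ Ideal.span (X '' S : Set (MvPolynomial (ZMod n) K))) :
    f ∈ cycleIdeal K n := by
  classical
  have key : ∀ μ ∈ f.support, ∃ i : ZMod n, μ i ≠ 0 ∧ μ (i + 1) ≠ 0 := by
    intro μ hμ
    by_contra hcon
    push_neg at hcon
    have hcover : ∀ i : ZMod n, i ∈ {i : ZMod n | μ i = 0} ∨ i + 1 ∈ {i : ZMod n | μ i = 0} := by
      intro i
      by_cases h : μ i = 0
      · exact Or.inl h
      · exact Or.inr (hcon i h)
    have hm := hf _ hcover
    rw [mem_ideal_span_X_image] at hm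
    obtain ⟨i, hiS, hine⟩ := hm μ hμ
    exact hine hiS
  rw [← support_sum_monomial_coeff f]
  apply Ideal.sum_mem
  intro μ hμ
  obtain ⟨i, h1, h2⟩ := key μ hμ
  exact monomial_mem_cycle hn5 μ _ i h1 h2

lemma edge_mem_cycle {n : ℕ} (j : ℕ) :
    X ((j : ZMod n)) * X ((j : ZMod n) + 1) ∈ cycleIdeal K n :=
  Ideal.subset_span ⟨(j : ZMod n), rfl⟩

lemma radical_le_cycle {n : ℕ} (hn5 : 5 ≤ n) {J : Ideal (MvPolynomial (ZMod n) K)}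
    (hJ : J ≤ cycleIdeal K n) : J.radical ≤ cycleIdeal K n := by
  intro f hf
  apply mem_cycle_of_forall_cover hn5
  intro S hS
  have h1 : cycleIdeal K n ≤ Ideal.span (X '' S : Set (MvPolynomial (ZMod n) K)) := by
    rw [cycleIdeal, Ideal.span_le]
    rintro _ ⟨i, rfl⟩
    rcases hS i with h | h
    · exact Ideal.mul_mem_right _ _ (Ideal.subset_span ⟨i, h, rfl⟩)
    · exact Ideal.mul_mem_left _ _ (Ideal.subset_span ⟨i + 1, h, rfl⟩)
  have h2 : J.radical ≤ (Ideal.span (X '' S : Set (MvPolynomial (ZMod n) K))).radical :=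
    Ideal.radical_mono (le_trans hJ h1)
  rw [Ideal.IsPrime.radical (isPrime_span_X (K := K) S)] at h2
  exact h2 hf


/-- Abstract derivation: from the Schmitt–Vogel style sums `q` in a radical ideal `Jr`,
all the cycle edges `x t * x (t+1)` lie in `Jr`. -/
lemma cycle_derivation {R : Type} [CommRing R] (Jr : Ideal R)
    (hrad : ∀ v : R, v ^ 2 ∈ Jr → v ∈ Jr)
    (x : ℕ → R) (m j : ℕ) (hj : j + 1 = m)
    (hq0 : x 1 * x 2 ∈ Jr)
    (hodd : ∀ i, i < m → x (3*i+2) * x (3*i+3) + x (3*i+4) * x (3*i+5) ∈ Jr)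
    (heven : ∀ i, 1 ≤ i → i < m → x (3*i) * x (3*i+1) + x (3*i+2) * x (3*i+3) ∈ Jr)
    (hlast : x 1 * x (3*m+2) + x (3*m) * x (3*m+1) ∈ Jr)
    (hper : x (3*m+3) = x 1) :
    ∀ t, 1 ≤ t → t ≤ 3*m+2 → x t * x (t+1) ∈ Jr := by
  -- helper lemmas
  have L1a : ∀ a b c : R, a + b ∈ Jr → c * a ∈ Jr → c * b ∈ Jr := by
    intro a b c h1 h2
    have e : c * b = c * (a + b) - c * a := by ring
    rw [e]
    exact sub_mem (Ideal.mul_mem_left _ _ h1) h2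
  have Lp : ∀ a b : R, a + b ∈ Jr → a ∈ Jr → b ∈ Jr := by
    intro a b h1 h2
    have e : b = (a + b) - a := by ring
    rw [e]; exact sub_mem h1 h2
  have Lq : ∀ a b : R, a + b ∈ Jr → b ∈ Jr → a ∈ Jr := by
    intro a b h1 h2
    exact Lp b a (by rwa [add_comm]) h2
  have L2 : ∀ v w u : R, u ∈ Jr → v ^ 2 = w * u → v ∈ Jr := by
    intro v w u hu he
    exact hrad v (he ▸ Ideal.mul_mem_left _ _ hu)
  -- normalized form of heven
  have heven' : ∀ i, i + 1 < m → x (3*i+3) * x (3*i+4) + x (3*i+5) * x (3*i+6) ∈ Jr := by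
    intro i hi
    have h := heven (i+1) (by omega) hi
    rw [show 3*(i+1) = 3*i+3 by ring] at h
    rw [show 3*i+3+1 = 3*i+4 by omega, show 3*i+3+2 = 3*i+5 by omega,
      show 3*i+3+3 = 3*i+6 by omega] at h
    exact h
  -- step: from E_{3(i+1)} get E_{3(i+1)+1}
  have hstep : ∀ i, i < m → x (3*i+3) * x (3*i+4) ∈ Jr → x (3*i+4) * x (3*i+5) ∈ Jr := by
    intro i hi hE
    have m1 := Ideal.mul_mem_left Jr (x (3*i+2)) hE
    have e : x (3*i+2) * (x (3*i+3) * x (3*i+4)) = x (3*i+4) * (x (3*i+2) * x (3*i+3)) := by ring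
    rw [e] at m1
    have s := L1a _ _ _ (hodd i hi) m1
    exact L2 _ (x (3*i+5)) _ s (by ring)
  -- upward chain
  have up : ∀ i, i ≤ j → x 1 * (x (3*i+2) * x (3*i+3)) ∈ Jr := by
    intro i
    induction i with
    | zero =>
      intro _
      have h := Ideal.mul_mem_left Jr (x 3) hq0
      have e : x 3 * (x 1 * x 2) = x 1 * (x (3*0+2) * x (3*0+3)) := by norm_num; ring
      rwa [e] at h
    | succ i ih =>
      intro hle
      have hB := ih (by omega)
      have s2 : x 1 * (x (3*i+4) * x (3*i+5)) ∈ Jr := L1a _ _ _ (hodd i (by omega)) hB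
      have s3 := Ideal.mul_mem_left Jr (x (3*i+6)) s2
      have e3 : x (3*i+6) * (x 1 * (x (3*i+4) * x (3*i+5))) =
          (x 1 * x (3*i+4)) * (x (3*i+5) * x (3*i+6)) := by ring
      rw [e3] at s3
      have hev := heven' i (by omega)
      have s4 : (x 1 * x (3*i+4)) * (x (3*i+3) * x (3*i+4)) ∈ Jr :=
        L1a _ _ _ (by rwa [add_comm] at hev) s3
      have s5 : x 1 * (x (3*i+3) * x (3*i+4)) ∈ Jr :=
        L2 _ (x 1 * x (3*i+3)) _ s4 (by ring)
      have s6 : x 1 * (x (3*i+5) * x (3*i+6)) ∈ Jr := L1a _ _ _ hev s5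
      rw [show 3*(i+1)+2 = 3*i+5 by ring, show 3*(i+1)+3 = 3*i+6 by ring]
      exact s6
  -- closing
  have hAm : x 1 * (x (3*j+4) * x (3*j+5)) ∈ Jr := L1a _ _ _ (hodd j (by omega)) (up j le_rfl)
  rw [show 3*j+4 = 3*m+1 by omega, show 3*j+5 = 3*m+2 by omega] at hAm
  have e5 : x 1 * (x (3*m+1) * x (3*m+2)) = x (3*m+1) * (x 1 * x (3*m+2)) := by ring
  rw [e5] at hAm
  have s7 : x (3*m+1) * (x (3*m) * x (3*m+1)) ∈ Jr := L1a _ _ _ hlast hAm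
  have hE3m : x (3*m) * x (3*m+1) ∈ Jr := L2 _ (x (3*m)) _ s7 (by ring)
  have hEn : x 1 * x (3*m+2) ∈ Jr := Lq _ _ hlast hE3m
  have hE3m' : x (3*j+3) * x (3*j+4) ∈ Jr := by
    rw [show 3*j+3 = 3*m by omega, show 3*j+4 = 3*m+1 by omega]
    exact hE3m
  have hE3m1 : x (3*j+4) * x (3*j+5) ∈ Jr := hstep j (by omega) hE3m'
  have hbase : x (3*j+2) * x (3*j+3) ∈ Jr := Lq _ _ (hodd j (by omega)) hE3m1
  -- downward chain
  have down : ∀ d, ∀ i, i + d = j → x (3*i+2) * x (3*i+3) ∈ Jr := by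
    intro d
    induction d with
    | zero =>
      intro i h
      have : i = j := by omega
      subst this
      exact hbase
    | succ d ih =>
      intro i h
      have hD1 := ih (i+1) (by omega)
      rw [show 3*(i+1)+2 = 3*i+5 by ring, show 3*(i+1)+3 = 3*i+6 by ring] at hD1
      have hE3 : x (3*i+3) * x (3*i+4) ∈ Jr := Lq _ _ (heven' i (by omega)) hD1
      have hE4 : x (3*i+4) * x (3*i+5) ∈ Jr := hstep i (by omega) hE3
      exact Lq _ _ (hodd i (by omega)) hE4
  -- assemble all edges
  intro t h1 h2
  obtain ⟨i, r, hr, ht⟩ : ∃ i r, r < 3 ∧ t = 3*i + r := ⟨t/3, t%3, by omega, by omega⟩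
  subst ht
  interval_cases r
  · -- t = 3i, 1 ≤ i ≤ m
    rw [show 3*i+0 = 3*i by ring, show 3*i+0+1 = 3*i+1 by omega]
    by_cases him : i = m
    · rw [him]; exact hE3m
    · -- i ≤ j
      have hD := down (j - i) i (by omega)
      exact Lq _ _ (heven i (by omega) (by omega)) hD
  · -- t = 3i+1
    rw [show 3*i+1+1 = 3*i+2 by omega]
    by_cases hi0 : i = 0
    · subst hi0; norm_num; exact hq0
    · by_cases him : i = m
      · rw [him, show 3*m+1 = 3*j+4 by omega, show 3*m+2 = 3*j+5 by omega]
        exact hE3m1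
      · -- 1 ≤ i ≤ j : i = i'+1
        obtain ⟨i', rfl⟩ : ∃ i', i = i' + 1 := ⟨i - 1, by omega⟩
        have hD := down (j - (i'+1)) (i'+1) (by omega)
        rw [show 3*(i'+1)+2 = 3*i'+5 by ring, show 3*(i'+1)+3 = 3*i'+6 by ring] at hD
        have hE3 : x (3*i'+3) * x (3*i'+4) ∈ Jr := Lq _ _ (heven' i' (by omega)) hD
        have := hstep i' (by omega) hE3
        rw [show 3*(i'+1)+1 = 3*i'+4 by ring, show 3*(i'+1)+2 = 3*i'+5 by ring]
        exact this
  · -- t = 3i+2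
    rw [show 3*i+2+1 = 3*i+3 by omega]
    by_cases him : i = m
    · rw [him, hper, mul_comm]
      exact hEn
    · have hD := down (j - i) i (by omega)
      exact hD

section QTwoLemmas

variable (K : Type) [Field K] (n m : ℕ)

lemma qTwo_zero : qTwo K n m 0 = xv K n 1 * xv K n 2 := by simp [qTwo]

lemma qTwo_odd {i : ℕ} (h : i < m) : qTwo K n m (2*i+1) =
    xv K n (3*i+2) * xv K n (3*i+3) + xv K n (3*i+4) * xv K n (3*i+5) := by
  rcases Nat.eq_zero_or_pos i with rfl | hpos
  · norm_num [qTwo]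
  · have c0 : 2*i+1 ≠ 0 := by omega
    have c1 : 2*i+1 ≠ 1 := by omega
    have c2 : 2*i+1 ≠ 2*m := by omega
    have c3 : ¬((2*i+1) % 2 = 0) := by omega
    rw [qTwo, if_neg c0, if_neg c1, if_neg c2, if_neg c3, show (2*i+1)/2 = i by omega]

lemma qTwo_even {i : ℕ} (h1 : 1 ≤ i) (h2 : i < m) : qTwo K n m (2*i) =
    xv K n (3*i) * xv K n (3*i+1) + xv K n (3*i+2) * xv K n (3*i+3) := by
  have c0 : 2*i ≠ 0 := by omega
  have c1 : 2*i ≠ 1 := by omega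
  have c2 : 2*i ≠ 2*m := by omega
  have c3 : (2*i) % 2 = 0 := by omega
  rw [qTwo, if_neg c0, if_neg c1, if_neg c2, if_pos c3, show (2*i)/2 = i by omega]

lemma qTwo_last (hm : 1 ≤ m) : qTwo K n m (2*m) =
    xv K n 1 * xv K n (3*m+2) + xv K n (3*m) * xv K n (3*m+1) := by
  have c0 : 2*m ≠ 0 := by omega
  have c1 : 2*m ≠ 1 := by omega
  rw [qTwo, if_neg c0, if_neg c1, if_pos rfl]

end QTwoLemmas

lemma xv_per (K : Type) [Field K] (m : ℕ) : xv K (3*m+2) (3*m+3) = xv K (3*m+2) 1 := by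
  rw [xv, xv]
  congr 1
  have h0 : ((3*m+2 : ℕ) : ZMod (3*m+2)) = 0 := ZMod.natCast_self _
  have h1 : ((3*m+3 : ℕ) : ZMod (3*m+2)) = ((3*m+2 : ℕ) : ZMod (3*m+2)) + 1 := by
    push_cast
    ring
  rw [h1, h0, zero_add]
  norm_num

lemma edge_mem_cycle' (K : Type) [Field K] (n : ℕ) (a b : ℕ) (hb : b = a + 1) :
    xv K n a * xv K n b ∈ cycleIdeal K n := by
  subst hb
  apply Ideal.subset_span
  exact ⟨(a : ZMod n), by rw [xv, xv, Nat.cast_add, Nat.cast_one]⟩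

lemma qTwo_mem_cycle (K : Type) [Field K] (m : ℕ) (j : ℕ) :
    qTwo K (3*m+2) m j ∈ cycleIdeal K (3*m+2) := by
  have he : ∀ a b : ℕ, b = a + 1 →
      xv K (3*m+2) a * xv K (3*m+2) b ∈ cycleIdeal K (3*m+2) :=
    fun a b hb => edge_mem_cycle' K (3*m+2) a b hb
  have hwrap : xv K (3*m+2) 1 * xv K (3*m+2) (3*m+2) ∈ cycleIdeal K (3*m+2) := by
    have h := he (3*m+2) (3*m+3) (by omega)
    rw [xv_per] at h
    rwa [mul_comm (xv K (3*m+2) (3*m+2)) (xv K (3*m+2) 1)] at h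
  rw [qTwo]
  split_ifs
  · exact he 1 2 (by omega)
  · exact add_mem (he 2 3 (by omega)) (he 4 5 (by omega))
  · exact add_mem hwrap (he (3*m) (3*m+1) (by omega))
  · exact add_mem (he _ _ (by omega)) (he _ _ (by omega))
  · exact add_mem (he _ _ (by omega)) (he _ _ (by omega))


/-- For `n = 3m+2`, the edge ideal of the `n`-cycle equals the radical of the ideal
generated by `q₀, …, q_{2m}`; in particular `ara I(Cₙ) ≤ 2m + 1`. -/
theorem cycle_two_mod_three_radical (K : Type) [Field K] (m : ℕ) (hm : 1 ≤ m)
    (n : ℕ) (hn : n = 3 * m + 2) :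
    cycleIdeal K n =
        (Ideal.span (Set.range fun j : Fin (2 * m + 1) => qTwo K n m j.1)).radical ∧
      araRank (cycleIdeal K n) ≤ 2 * m + 1 := by
  subst hn
  haveI : NeZero (3 * m + 2) := ⟨by omega⟩
  set J : Ideal (MvPolynomial (ZMod (3 * m + 2)) K) :=
    Ideal.span (Set.range fun j : Fin (2 * m + 1) => qTwo K (3 * m + 2) m j.1) with hJ
  have hq : ∀ jj : ℕ, jj < 2 * m + 1 → qTwo K (3 * m + 2) m jj ∈ J.radical := by
    intro jj hjj
    exact Ideal.le_radical (Ideal.subset_span ⟨⟨jj, hjj⟩, rfl⟩)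
  have hrad : ∀ v : MvPolynomial (ZMod (3 * m + 2)) K, v ^ 2 ∈ J.radical → v ∈ J.radical := by
    intro v hv
    have h2 : v ∈ (J.radical).radical := ⟨2, hv⟩
    rwa [Ideal.radical_idem] at h2
  have hq0 : xv K (3*m+2) 1 * xv K (3*m+2) 2 ∈ J.radical := by
    have h := hq 0 (by omega)
    rwa [qTwo_zero] at h
  have hodd : ∀ i, i < m → xv K (3*m+2) (3*i+2) * xv K (3*m+2) (3*i+3) +
      xv K (3*m+2) (3*i+4) * xv K (3*m+2) (3*i+5) ∈ J.radical := by
    intro i hi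
    have h := hq (2*i+1) (by omega)
    rwa [qTwo_odd K (3*m+2) m hi] at h
  have heven : ∀ i, 1 ≤ i → i < m → xv K (3*m+2) (3*i) * xv K (3*m+2) (3*i+1) +
      xv K (3*m+2) (3*i+2) * xv K (3*m+2) (3*i+3) ∈ J.radical := by
    intro i h1 h2
    have h := hq (2*i) (by omega)
    rwa [qTwo_even K (3*m+2) m h1 h2] at h
  have hlast : xv K (3*m+2) 1 * xv K (3*m+2) (3*m+2) +
      xv K (3*m+2) (3*m) * xv K (3*m+2) (3*m+1) ∈ J.radical := by
    have h := hq (2*m) (by omega)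
    rwa [qTwo_last K (3*m+2) m hm] at h
  have hEdges := cycle_derivation J.radical hrad (xv K (3*m+2)) m (m-1) (by omega)
    hq0 hodd heven hlast (xv_per K m)
  have part1 : cycleIdeal K (3 * m + 2) = J.radical := by
    apply le_antisymm
    · rw [cycleIdeal, Ideal.span_le]
      rintro _ ⟨i0, rfl⟩
      simp only [SetLike.mem_coe]
      by_cases h0 : i0.val = 0
      · have h := hEdges (3*m+2) (by omega) (by omega)
        rw [xv_per] at h
        have e1 : xv K (3*m+2) (3*m+2) = X i0 := by
          rw [xv, ZMod.natCast_self]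
          congr 1
          exact ((ZMod.val_eq_zero i0).mp h0).symm
        have e2 : xv K (3*m+2) 1 = X (i0 + 1) := by
          rw [xv]
          congr 1
          have : i0 = 0 := (ZMod.val_eq_zero i0).mp h0
          rw [this, zero_add]
          norm_num
        rwa [e1, e2] at h
      · have hval : 1 ≤ i0.val ∧ i0.val ≤ 3*m+1 := by
          constructor
          · omega
          · have := ZMod.val_lt i0
            omega
        have h := hEdges i0.val hval.1 (by omega)
        have e1 : xv K (3*m+2) i0.val = X i0 := by
          rw [xv, ZMod.natCast_val, ZMod.cast_id]
        have e2 : xv K (3*m+2) (i0.val + 1) = X (i0 + 1) := by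
          rw [xv]
          push_cast
          rw [ZMod.natCast_val, ZMod.cast_id]
        rwa [e1, e2] at h
    · apply radical_le_cycle (by omega)
      rw [hJ, Ideal.span_le]
      rintro _ ⟨jf, rfl⟩
      exact qTwo_mem_cycle K m jf.1
  refine ⟨part1, ?_⟩
  apply Nat.sInf_le
  refine ⟨fun j : Fin (2*m+1) => qTwo K (3*m+2) m j.1, ?_⟩
  rw [← hJ, part1, Ideal.radical_idem]
end

section
/- Let $K$ be a field, $n = 3m+2$ with $m \geq 2$, $R = K[x_1,\dots,x_n]$, and let $J_m$ be the ideal generated by $q_0 = x_1x_2$, $q_1 = x_2x_3 + x_4x_5$, $q_{2i} = x_{3i}x_{3i+1}+x_{3i+2}x_{3i+3}$ and $q_{2i+1} = x_{3i+2}x_{3i+3}+x_{3i+4}x_{3i+5}$ for $1 \leq i \leq m-1$, and $q_{2m} = x_1x_{3m+2}+x_{3m}x_{3m+1}$. Then $x_1^{2^m} x_{3m+2}^{2^{m+1}} \in J_m$; in particular $x_1 x_{3m+2} \in \sqrt{J_m}$. -/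
open MvPolynomial

/-- Transfer lemma: if `u + v ∈ J` and `w * u^k ∈ J`, then `w * v^k ∈ J`. -/
lemma trans_pow {R : Type*} [CommRing R] (J : Ideal R) (u v w : R) (k : ℕ)
    (h1 : u + v ∈ J) (h2 : w * u ^ k ∈ J) : w * v ^ k ∈ J := by
  obtain ⟨c, hc⟩ := sub_dvd_pow_sub_pow v (-u) k
  have hv : w * v ^ k = (v + u) * c * w + (-1) ^ k * (w * u ^ k) := by
    have hvk : v ^ k = (v - -u) * c + (-u) ^ k := by
      rw [← hc]; ring
    rw [hvk, neg_pow]; ring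
  rw [hv]
  refine J.add_mem (J.mul_mem_right _ (J.mul_mem_right _ ?_)) (J.mul_mem_left _ h2)
  rwa [add_comm] at h1

/-- Squaring transfer: if `u + v ∈ J` and `w * (u*v)^k ∈ J`, then `w * (v^2)^k ∈ J`. -/
lemma trans_sq {R : Type*} [CommRing R] (J : Ideal R) (u v w : R) (k : ℕ)
    (h1 : u + v ∈ J) (h2 : w * (u * v) ^ k ∈ J) : w * (v ^ 2) ^ k ∈ J := by
  refine trans_pow J (u * v) (v ^ 2) w k ?_ h2
  have h : u * v + v ^ 2 = v * (u + v) := by ring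
  rw [h]; exact J.mul_mem_left v h1

/-- For `n = 3m+2` with `m ≥ 2` and `J_m = (q₀,…,q_{2m})`, one has
`x₁^(2^m) · x_{3m+2}^(2^(m+1)) ∈ J_m`; in particular `x₁x_{3m+2} ∈ √J_m`. -/
theorem cycle_two_mod_three_key_membership (K : Type) [Field K] (m : ℕ) (hm : 2 ≤ m)
    (n : ℕ) (hn : n = 3 * m + 2) :
    xv K n 1 ^ 2 ^ m * xv K n (3 * m + 2) ^ 2 ^ (m + 1) ∈
        Ideal.span (Set.range fun j : Fin (2 * m + 1) => qTwo K n m j.1) ∧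
      xv K n 1 * xv K n (3 * m + 2) ∈
        (Ideal.span (Set.range fun j : Fin (2 * m + 1) => qTwo K n m j.1)).radical := by
  obtain ⟨m', rfl⟩ : ∃ m', m = m' + 2 := ⟨m - 2, by omega⟩
  set J : Ideal (MvPolynomial (ZMod n) K) :=
    Ideal.span (Set.range fun j : Fin (2 * (m' + 2) + 1) => qTwo K n (m' + 2) j.1) with hJ
  set x : ℕ → MvPolynomial (ZMod n) K := xv K n with hx
  -- generators belong to J
  have hgen : ∀ j : ℕ, j < 2 * (m' + 2) + 1 → qTwo K n (m' + 2) j ∈ J := by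
    intro j hj
    exact Ideal.subset_span ⟨⟨j, hj⟩, rfl⟩
  have hq0 : x 1 * x 2 ∈ J := by
    simpa [qTwo, hx] using hgen 0 (by omega)
  have hq1 : x 2 * x 3 + x 4 * x 5 ∈ J := by
    simpa [qTwo, hx] using hgen 1 (by omega)
  have hq2m : x 1 * x (3 * m' + 8) + x (3 * m' + 6) * x (3 * m' + 7) ∈ J := by
    have h := hgen (2 * (m' + 2)) (by omega)
    rw [qTwo, if_neg (by omega), if_neg (by omega), if_pos rfl] at h
    simpa only [show 3 * (m' + 2) + 2 = 3 * m' + 8 from by ring,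
      show 3 * (m' + 2) = 3 * m' + 6 from by ring,
      show 3 * (m' + 2) + 1 = 3 * m' + 7 from by ring, hx] using h
  have hqeven : ∀ p : ℕ, p + 2 ≤ m' + 2 →
      x (3 * p + 3) * x (3 * p + 4) + x (3 * p + 5) * x (3 * p + 6) ∈ J := by
    intro p hp
    have h := hgen (2 * p + 2) (by omega)
    rw [qTwo, if_neg (by omega), if_neg (by omega), if_neg (by omega),
      if_pos (by omega)] at h
    simpa only [show (2 * p + 2) / 2 = p + 1 from by omega,
      show 3 * (p + 1) = 3 * p + 3 from by ring,
      show 3 * (p + 1) + 1 = 3 * p + 4 from by ring,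
      show 3 * (p + 1) + 2 = 3 * p + 5 from by ring,
      show 3 * (p + 1) + 3 = 3 * p + 6 from by ring, hx] using h
  have hqodd : ∀ p : ℕ, p + 2 ≤ m' + 2 →
      x (3 * p + 5) * x (3 * p + 6) + x (3 * p + 7) * x (3 * p + 8) ∈ J := by
    intro p hp
    have h := hgen (2 * p + 3) (by omega)
    rw [qTwo, if_neg (by omega), if_neg (by omega), if_neg (by omega),
      if_neg (by omega)] at h
    simpa only [show (2 * p + 3) / 2 = p + 1 from by omega,
      show 3 * (p + 1) + 2 = 3 * p + 5 from by ring,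
      show 3 * (p + 1) + 3 = 3 * p + 6 from by ring,
      show 3 * (p + 1) + 4 = 3 * p + 7 from by ring,
      show 3 * (p + 1) + 5 = 3 * p + 8 from by ring, hx] using h
  -- key lemma: x₁ · (x_{3i+4} x_{3i+5})^{2^i} ∈ J for i+1 ≤ m
  have key : ∀ i : ℕ, i + 1 ≤ m' + 2 → x 1 * (x (3 * i + 4) * x (3 * i + 5)) ^ 2 ^ i ∈ J := by
    intro i
    induction i with
    | zero =>
      intro _
      have e : x 1 * (x (3 * 0 + 4) * x (3 * 0 + 5)) ^ 2 ^ 0 =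
          x 1 * (x 2 * x 3 + x 4 * x 5) - x 3 * (x 1 * x 2) := by
        norm_num; ring
      rw [e]
      exact J.sub_mem (J.mul_mem_left _ hq1) (J.mul_mem_left _ hq0)
    | succ p ih =>
      intro hp
      have ihp := ih (by omega)
      have eidx1 : 3 * (p + 1) + 4 = 3 * p + 7 := by ring
      have eidx2 : 3 * (p + 1) + 5 = 3 * p + 8 := by ring
      rw [eidx1, eidx2]
      refine trans_pow J (x (3 * p + 5) * x (3 * p + 6)) _ _ _ (hqodd p (by omega)) ?_
      rw [show (2 : ℕ) ^ (p + 1) = 2 * 2 ^ p from by rw [pow_succ]; ring, pow_mul]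
      refine trans_sq J (x (3 * p + 3) * x (3 * p + 4)) _ _ _ (hqeven p (by omega)) ?_
      have e : x 1 * (x (3 * p + 3) * x (3 * p + 4) * (x (3 * p + 5) * x (3 * p + 6))) ^ 2 ^ p =
          (x (3 * p + 3) * x (3 * p + 6)) ^ 2 ^ p *
            (x 1 * (x (3 * p + 4) * x (3 * p + 5)) ^ 2 ^ p) := by ring
      rw [e]
      exact J.mul_mem_left _ ihp
  -- main membership
  have hidx : 3 * (m' + 2) + 2 = 3 * m' + 8 := by ring
  have main : x 1 ^ 2 ^ (m' + 2) * x (3 * m' + 8) ^ 2 ^ (m' + 2 + 1) ∈ J := by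
    have e1 : x 1 ^ 2 ^ (m' + 2) * x (3 * m' + 8) ^ 2 ^ (m' + 2 + 1) =
        x (3 * m' + 8) ^ 2 ^ (m' + 2) * ((x 1 * x (3 * m' + 8)) ^ 2) ^ 2 ^ (m' + 1) := by
      ring
    rw [e1]
    refine trans_sq J (x (3 * m' + 6) * x (3 * m' + 7)) _ _ _ (by rwa [add_comm] at hq2m) ?_
    obtain ⟨t, ht⟩ : ∃ t, 2 ^ (m' + 1) = t + 1 :=
      ⟨2 ^ (m' + 1) - 1, by have := Nat.two_pow_pos (m' + 1); omega⟩
    have hk := key (m' + 1) (by omega)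
    rw [show 3 * (m' + 1) + 4 = 3 * m' + 7 from by ring,
      show 3 * (m' + 1) + 5 = 3 * m' + 8 from by ring, ht] at hk
    rw [ht]
    have e2 : x (3 * m' + 8) ^ 2 ^ (m' + 2) *
          (x (3 * m' + 6) * x (3 * m' + 7) * (x 1 * x (3 * m' + 8))) ^ (t + 1) =
        (x (3 * m' + 8) ^ 2 ^ (m' + 2) * x 1 ^ t * x (3 * m' + 6) ^ (t + 1)) *
          (x 1 * (x (3 * m' + 7) * x (3 * m' + 8)) ^ (t + 1)) := by ring
    rw [e2]
    exact J.mul_mem_left _ hk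
  rw [hidx]
  refine ⟨main, ⟨2 ^ (m' + 2 + 1), ?_⟩⟩
  have e3 : (x 1 * x (3 * m' + 8)) ^ 2 ^ (m' + 2 + 1) =
      x 1 ^ 2 ^ (m' + 2) * (x 1 ^ 2 ^ (m' + 2) * x (3 * m' + 8) ^ 2 ^ (m' + 2 + 1)) := by
    ring
  rw [e3]
  exact J.mul_mem_left _ main
end

section
/- Let $K$ be a field and let $G$ be the graph consisting of two triangles sharing exactly one vertex: vertices $x_1, x_2, x_3, y_2, y_3$ with edges $\{x_1,x_2\}, \{x_2,x_3\}, \{x_3,x_1\}, \{x_1,y_2\}, \{y_2,y_3\}, \{y_3,x_1\}$. Then the four elements $x_1x_2$, $x_2x_3 + x_1x_3$, $x_1y_2$, $x_1y_3 + y_2y_3$ generate the edge ideal $I(G)$ up to radical, i.e., $I(G) = \sqrt{(x_1x_2,\, x_2x_3+x_1x_3,\, x_1y_2,\, x_1y_3+y_2y_3)}$. -/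
open MvPolynomial Finsupp

variable {K : Type} [Field K]

lemma span_X_isPrime {σ : Type} [DecidableEq σ] (S : Set σ) :
    (Ideal.span (X '' S : Set (MvPolynomial σ K))).IsPrime := by
  classical
  set g : σ → MvPolynomial σ K := fun i => if i ∈ S then 0 else X i with hg
  have key : ∀ f : MvPolynomial σ K,
      f - aeval g f ∈ Ideal.span (X '' S : Set (MvPolynomial σ K)) := by
    intro f
    induction f using MvPolynomial.induction_on with
    | C a => simp
    | add p q hp hq => simpa [add_sub_add_comm] using Ideal.add_mem _ hp hq
    | mul_X p i hp =>
        by_cases hi : i ∈ S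
        · have hx : (X i : MvPolynomial σ K) ∈ Ideal.span (X '' S : Set (MvPolynomial σ K)) :=
            Ideal.subset_span ⟨i, hi, rfl⟩
          simp only [map_mul, aeval_X, hg, if_pos hi, mul_zero, sub_zero]
          exact Ideal.mul_mem_left _ _ hx
        · have : p * X i - aeval g (p * X i) = (p - aeval g p) * X i := by
            simp [hg, if_neg hi]; ring
          rw [this]
          exact Ideal.mul_mem_right _ _ hp
  have hker : Ideal.span (X '' S : Set (MvPolynomial σ K)) =
      RingHom.ker (aeval g : MvPolynomial σ K →ₐ[K] MvPolynomial σ K) := by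
    apply le_antisymm
    · rw [Ideal.span_le]
      rintro _ ⟨i, hi, rfl⟩
      simp [RingHom.mem_ker, hg, if_pos hi]
    · intro f hf
      have h0 : aeval g f = 0 := hf
      have h2 := key f
      rw [h0, sub_zero] at h2
      exact h2
  rw [hker]
  exact RingHom.ker_isPrime _

lemma XmulX (i j : Fin 5) :
    (X i * X j : MvPolynomial (Fin 5) K)
      = monomial (Finsupp.single i 1 + Finsupp.single j 1) (1 : K) := by
  rw [X, X, monomial_mul, one_mul]

lemma edge_le {i j : Fin 5} (hij : i ≠ j) {m : Fin 5 →₀ ℕ} (hi : m i ≠ 0) (hj : m j ≠ 0) :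
    Finsupp.single i 1 + Finsupp.single j 1 ≤ m := by
  rw [Finsupp.le_def]
  intro k
  rw [Finsupp.add_apply, Finsupp.single_apply, Finsupp.single_apply]
  rcases eq_or_ne i k with h1 | h1 <;> rcases eq_or_ne j k with h2 | h2
  · exact absurd (h1.trans h2.symm) hij
  · subst h1; simp [h2, Nat.one_le_iff_ne_zero, hi]
  · subst h2; simp [h1, Nat.one_le_iff_ne_zero, hj]
  · simp [h1, h2]

lemma Xmul_mem_left {i : Fin 5} {S : Set (Fin 5)} (hi : i ∈ S) (j : Fin 5) :
    (X i * X j : MvPolynomial (Fin 5) K) ∈ Ideal.span (X '' S : Set (MvPolynomial (Fin 5) K)) :=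
  Ideal.mul_mem_right _ _ (Ideal.subset_span ⟨i, hi, rfl⟩)

lemma Xmul_mem_right {j : Fin 5} {S : Set (Fin 5)} (hj : j ∈ S) (i : Fin 5) :
    (X i * X j : MvPolynomial (Fin 5) K) ∈ Ideal.span (X '' S : Set (MvPolynomial (Fin 5) K)) :=
  Ideal.mul_mem_left _ _ (Ideal.subset_span ⟨j, hj, rfl⟩)

/-- The edge ideal of two triangles sharing the vertex `x₁`, in
`R = K[x₁,x₂,x₃,y₂,y₃]` (variables `X 0, X 1, X 2, X 3, X 4`), is generated up to
radical by the four elements `x₁x₂`, `x₂x₃+x₁x₃`, `x₁y₂`, `x₁y₃+y₂y₃`. -/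
theorem two_triangles_ara_four_elements (K : Type) [Field K] :
    (Ideal.span {(X 0 * X 1 : MvPolynomial (Fin 5) K), X 1 * X 2, X 0 * X 2,
        X 0 * X 3, X 3 * X 4, X 0 * X 4}) =
      (Ideal.span {(X 0 * X 1 : MvPolynomial (Fin 5) K), X 1 * X 2 + X 0 * X 2,
        X 0 * X 3, X 0 * X 4 + X 3 * X 4}).radical := by
  set J : Ideal (MvPolynomial (Fin 5) K) :=
    Ideal.span {(X 0 * X 1 : MvPolynomial (Fin 5) K), X 1 * X 2 + X 0 * X 2,
        X 0 * X 3, X 0 * X 4 + X 3 * X 4} with hJ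
  set I : Ideal (MvPolynomial (Fin 5) K) :=
    Ideal.span {(X 0 * X 1 : MvPolynomial (Fin 5) K), X 1 * X 2, X 0 * X 2,
        X 0 * X 3, X 3 * X 4, X 0 * X 4} with hI
  have hg1 : (X 0 * X 1 : MvPolynomial (Fin 5) K) ∈ J := Ideal.subset_span (by simp)
  have hg2 : (X 1 * X 2 + X 0 * X 2 : MvPolynomial (Fin 5) K) ∈ J := Ideal.subset_span (by simp)
  have hg3 : (X 0 * X 3 : MvPolynomial (Fin 5) K) ∈ J := Ideal.subset_span (by simp)
  have hg4 : (X 0 * X 4 + X 3 * X 4 : MvPolynomial (Fin 5) K) ∈ J := Ideal.subset_span (by simp)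
  apply le_antisymm
  · -- I ≤ √J
    rw [hI, Ideal.span_le]
    rintro f hf
    simp only [Set.mem_insert_iff, Set.mem_singleton_iff] at hf
    rcases hf with rfl | rfl | rfl | rfl | rfl | rfl
    · exact Ideal.le_radical hg1
    · refine ⟨2, ?_⟩
      have : (X 1 * X 2 : MvPolynomial (Fin 5) K) ^ 2 =
          (X 1 * X 2) * (X 1 * X 2 + X 0 * X 2) - (X 2 * X 2) * (X 0 * X 1) := by ring
      rw [this]
      exact sub_mem (Ideal.mul_mem_left _ _ hg2) (Ideal.mul_mem_left _ _ hg1)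
    · refine ⟨2, ?_⟩
      have : (X 0 * X 2 : MvPolynomial (Fin 5) K) ^ 2 =
          (X 0 * X 2) * (X 1 * X 2 + X 0 * X 2) - (X 2 * X 2) * (X 0 * X 1) := by ring
      rw [this]
      exact sub_mem (Ideal.mul_mem_left _ _ hg2) (Ideal.mul_mem_left _ _ hg1)
    · exact Ideal.le_radical hg3
    · refine ⟨2, ?_⟩
      have : (X 3 * X 4 : MvPolynomial (Fin 5) K) ^ 2 =
          (X 3 * X 4) * (X 0 * X 4 + X 3 * X 4) - (X 4 * X 4) * (X 0 * X 3) := by ring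
      rw [this]
      exact sub_mem (Ideal.mul_mem_left _ _ hg4) (Ideal.mul_mem_left _ _ hg3)
    · refine ⟨2, ?_⟩
      have : (X 0 * X 4 : MvPolynomial (Fin 5) K) ^ 2 =
          (X 0 * X 4) * (X 0 * X 4 + X 3 * X 4) - (X 4 * X 4) * (X 0 * X 3) := by ring
      rw [this]
      exact sub_mem (Ideal.mul_mem_left _ _ hg4) (Ideal.mul_mem_left _ _ hg3)
  · -- √J ≤ I
    -- covers
    have hJI : J ≤ I := by
      rw [hJ, Ideal.span_le]
      rintro f hf
      simp only [Set.mem_insert_iff, Set.mem_singleton_iff] at hf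
      have m01 : (X 0 * X 1 : MvPolynomial (Fin 5) K) ∈ I := Ideal.subset_span (by simp)
      have m12 : (X 1 * X 2 : MvPolynomial (Fin 5) K) ∈ I := Ideal.subset_span (by simp)
      have m02 : (X 0 * X 2 : MvPolynomial (Fin 5) K) ∈ I := Ideal.subset_span (by simp)
      have m03 : (X 0 * X 3 : MvPolynomial (Fin 5) K) ∈ I := Ideal.subset_span (by simp)
      have m34 : (X 3 * X 4 : MvPolynomial (Fin 5) K) ∈ I := Ideal.subset_span (by simp)
      have m04 : (X 0 * X 4 : MvPolynomial (Fin 5) K) ∈ I := Ideal.subset_span (by simp)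
      rcases hf with rfl | rfl | rfl | rfl
      · exact m01
      · exact add_mem m12 m02
      · exact m03
      · exact add_mem m04 m34
    have cover : ∀ (S : Set (Fin 5)),
        ((0 : Fin 5) ∈ S ∨ (1 : Fin 5) ∈ S) → ((1 : Fin 5) ∈ S ∨ (2 : Fin 5) ∈ S) →
        ((0 : Fin 5) ∈ S ∨ (2 : Fin 5) ∈ S) → ((0 : Fin 5) ∈ S ∨ (3 : Fin 5) ∈ S) →
        ((3 : Fin 5) ∈ S ∨ (4 : Fin 5) ∈ S) → ((0 : Fin 5) ∈ S ∨ (4 : Fin 5) ∈ S) →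
        J.radical ≤ Ideal.span (X '' S : Set (MvPolynomial (Fin 5) K)) := by
      intro S h1 h2 h3 h4 h5 h6
      have hprime := span_X_isPrime (K := K) S
      rw [← hprime.radical]
      apply Ideal.radical_mono
      refine le_trans hJI ?_
      rw [hI, Ideal.span_le]
      rintro f hf
      simp only [Set.mem_insert_iff, Set.mem_singleton_iff] at hf
      rcases hf with rfl | rfl | rfl | rfl | rfl | rfl
      · exact h1.elim (fun h => Xmul_mem_left h _) (fun h => Xmul_mem_right h _)
      · exact h2.elim (fun h => Xmul_mem_left h _) (fun h => Xmul_mem_right h _)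
      · exact h3.elim (fun h => Xmul_mem_left h _) (fun h => Xmul_mem_right h _)
      · exact h4.elim (fun h => Xmul_mem_left h _) (fun h => Xmul_mem_right h _)
      · exact h5.elim (fun h => Xmul_mem_left h _) (fun h => Xmul_mem_right h _)
      · exact h6.elim (fun h => Xmul_mem_left h _) (fun h => Xmul_mem_right h _)
    intro f hf
    have c1 := cover {0, 1, 3} (by simp) (by simp) (by simp) (by simp) (by simp) (by simp) hf
    have c2 := cover {0, 1, 4} (by simp) (by simp) (by simp) (by simp) (by simp) (by simp) hf
    have c3 := cover {0, 2, 3} (by simp) (by simp) (by simp) (by simp) (by simp) (by simp) hf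
    have c4 := cover {0, 2, 4} (by simp) (by simp) (by simp) (by simp) (by simp) (by simp) hf
    have c5 := cover {1, 2, 3, 4} (by simp) (by simp) (by simp) (by simp) (by simp) (by simp) hf
    -- translate to support conditions
    rw [mem_ideal_span_X_image] at c1 c2 c3 c4 c5
    -- I as monomial ideal
    have hmono : I = Ideal.span ((fun s => monomial s (1 : K)) ''
        {Finsupp.single (0 : Fin 5) 1 + Finsupp.single 1 1,
         Finsupp.single 1 1 + Finsupp.single 2 1,
         Finsupp.single 0 1 + Finsupp.single 2 1,
         Finsupp.single 0 1 + Finsupp.single 3 1,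
         Finsupp.single 3 1 + Finsupp.single 4 1,
         Finsupp.single 0 1 + Finsupp.single 4 1}) := by
      rw [hI]
      congr 1
      simp only [Set.image_insert_eq, Set.image_singleton, XmulX]
    rw [hmono, mem_ideal_span_monomial_image]
    intro m hm
    have d1 := c1 m hm
    have d2 := c2 m hm
    have d3 := c3 m hm
    have d4 := c4 m hm
    have d5 := c5 m hm
    simp only [Set.mem_insert_iff, Set.mem_singleton_iff, exists_eq_or_imp, exists_eq_left] at d1 d2 d3 d4 d5
    have key : (m 0 ≠ 0 ∧ m 1 ≠ 0) ∨ (m 1 ≠ 0 ∧ m 2 ≠ 0) ∨ (m 0 ≠ 0 ∧ m 2 ≠ 0) ∨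
        (m 0 ≠ 0 ∧ m 3 ≠ 0) ∨ (m 3 ≠ 0 ∧ m 4 ≠ 0) ∨ (m 0 ≠ 0 ∧ m 4 ≠ 0) := by
      by_cases h0 : m 0 = 0
      · have a1 := d1.resolve_left (not_not_intro h0)
        have a2 := d2.resolve_left (not_not_intro h0)
        have a3 := d3.resolve_left (not_not_intro h0)
        have a4 := d4.resolve_left (not_not_intro h0)
        rcases a1 with h1 | h3
        · rcases a4 with h2 | h4
          · exact Or.inr (Or.inl ⟨h1, h2⟩)
          · rcases a3 with h2 | h3
            · exact Or.inr (Or.inl ⟨h1, h2⟩)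
            · exact Or.inr (Or.inr (Or.inr (Or.inr (Or.inl ⟨h3, h4⟩))))
        · rcases a2 with h1 | h4
          · rcases a4 with h2 | h4
            · exact Or.inr (Or.inl ⟨h1, h2⟩)
            · exact Or.inr (Or.inr (Or.inr (Or.inr (Or.inl ⟨h3, h4⟩))))
          · exact Or.inr (Or.inr (Or.inr (Or.inr (Or.inl ⟨h3, h4⟩))))
      · rcases d5 with h | h | h | h
        · exact Or.inl ⟨h0, h⟩
        · exact Or.inr (Or.inr (Or.inl ⟨h0, h⟩))
        · exact Or.inr (Or.inr (Or.inr (Or.inl ⟨h0, h⟩)))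
        · exact Or.inr (Or.inr (Or.inr (Or.inr (Or.inr ⟨h0, h⟩))))
    rcases key with ⟨ha, hb⟩ | ⟨ha, hb⟩ | ⟨ha, hb⟩ | ⟨ha, hb⟩ | ⟨ha, hb⟩ | ⟨ha, hb⟩
    · exact ⟨_, Or.inl rfl, edge_le (by decide) ha hb⟩
    · exact ⟨_, Or.inr (Or.inl rfl), edge_le (by decide) ha hb⟩
    · exact ⟨_, Or.inr (Or.inr (Or.inl rfl)), edge_le (by decide) ha hb⟩
    · exact ⟨_, Or.inr (Or.inr (Or.inr (Or.inl rfl))), edge_le (by decide) ha hb⟩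
    · exact ⟨_, Or.inr (Or.inr (Or.inr (Or.inr (Or.inl rfl)))), edge_le (by decide) ha hb⟩
    · exact ⟨_, Or.inr (Or.inr (Or.inr (Or.inr (Or.inr rfl)))), edge_le (by decide) ha hb⟩
end
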